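/- arXiv:1202.0967 — 9 statements merged into one kernel-verified Lean document; each statement's English description precedes it below -/
import Mathlib

section
/- Let F be a bounded function on the circle of circumference L. Suppose that for a sequence of particle numbers N_p → ∞ there exists for each p a fixed configuration (x_1^{(p)}, ..., x_{N_p}^{(p)}) on the circle. Then as p → ∞, uniformly in i = 1, ..., N_p, the gaps satisfy Δ_i^{(p)} ~ L/N_p; that is, max_{1 ≤ i ≤ N_p} |N_p Δ_i^{(p)}/L − 1| → 0 as p → ∞. -/
open Real Filter Set Asymptotics

/-- The repulsion force `f(r) = r^{-a}`. -/
noncomputable def fpow (a r : ℝ) : ℝ := r ^ (-a)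

/-- The clockwise gaps of a configuration `x 1 < ... < x N` on the circle of
circumference `L`: `Δ k = x (k+1) - x k` for `1 ≤ k ≤ N-1` and `Δ N = L - x N + x 1`. -/
def cgap (L : ℝ) (N : ℕ) (x : ℕ → ℝ) (k : ℕ) : ℝ :=
  if k < N then x (k + 1) - x k else L - x N + x 1

/-- A configuration of `N` particles on the circle of circumference `L`,
variant with `0 ≤ x 1 < ... < x N < L`. -/
def CircleConfigA (L : ℝ) (N : ℕ) (x : ℕ → ℝ) : Prop :=
  0 ≤ x 1 ∧ (∀ k, 1 ≤ k → k < N → x k < x (k + 1)) ∧ x N < L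

/-- A fixed (critical) configuration on the circle (variant `0 ≤ x 1`, `x N < L`):
`f(Δ (k-1)) + F (x k) - f(Δ k) = 0` for `k = 1, ..., N`, with `Δ 0 = Δ N`. -/
def CircleFixedA (a L : ℝ) (F : ℝ → ℝ) (N : ℕ) (x : ℕ → ℝ) : Prop :=
  CircleConfigA L N x ∧
  ∀ k, 1 ≤ k → k ≤ N →
    fpow a (cgap L N x (if k = 1 then N else k - 1)) + F (x k) - fpow a (cgap L N x k) = 0

/-- A configuration of `N` particles on the circle of circumference `L`,
variant with `0 < x 1 < ... < x N ≤ L`. -/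
def CircleConfigB (L : ℝ) (N : ℕ) (x : ℕ → ℝ) : Prop :=
  0 < x 1 ∧ (∀ k, 1 ≤ k → k < N → x k < x (k + 1)) ∧ x N ≤ L

/-- A fixed (critical) configuration on the circle (variant `0 < x 1`, `x N ≤ L`):
`f(Δ (k-1)) + F (x k) - f(Δ k) = 0` for `k = 1, ..., N`, with `Δ 0 = Δ N`. -/
def CircleFixedB (a L : ℝ) (F : ℝ → ℝ) (N : ℕ) (x : ℕ → ℝ) : Prop :=
  CircleConfigB L N x ∧
  ∀ k, 1 ≤ k → k ≤ N →
    fpow a (cgap L N x (if k = 1 then N else k - 1)) + F (x k) - fpow a (cgap L N x k) = 0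

/-- A fixed configuration of `N` particles on the segment `[0, L]` with constant
force `F`, completely inelastic boundary conditions, and `x 1 = 0`, `x N = L`. -/
def SegmentFixed (a L F : ℝ) (N : ℕ) (x : ℕ → ℝ) : Prop :=
  x 1 = 0 ∧ x N = L ∧ (∀ k, 1 ≤ k → k < N → x k < x (k + 1)) ∧
  (∀ k, 2 ≤ k → k ≤ N - 1 → fpow a (x k - x (k - 1)) + F - fpow a (x (k + 1) - x k) = 0) ∧
  F - fpow a (x 2) ≤ 0 ∧ 0 ≤ F + fpow a (L - x (N - 1))


open Finset in
private lemma core_gaps (a L C : ℝ) (ha : 1 < a) (hL : 0 < L) (F : ℝ → ℝ)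
    (hF : ∀ y ∈ Set.Ico (0:ℝ) L, |F y| ≤ C)
    (ε δ : ℝ) (hδ0 : 0 < δ)
    (hδa : (1+ε) ^ (-a) < 1 - δ)
    (hδb : 1 + δ < (1-ε) ^ (-a))
    (hε0 : 0 < ε) (hε1 : ε < 1)
    (N : ℕ) (hN1 : 1 ≤ N)
    (hNC : 2 * N * C ≤ δ * ((N:ℝ)/L) ^ a)
    (x : ℕ → ℝ) (hx : CircleFixedA a L F N x) :
    ∀ i, 1 ≤ i → i ≤ N → |(N:ℝ) * cgap L N x i / L - 1| < ε := by
  obtain ⟨⟨hx1, hinc, hxN⟩, hfix⟩ := hx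
  have hNpos : (0:ℝ) < N := by exact_mod_cast hN1
  have hC : 0 ≤ C := le_trans (abs_nonneg _) (hF 0 ⟨le_refl _, hL⟩)
  -- monotonicity
  have hmono : ∀ i j, 1 ≤ i → i ≤ j → j ≤ N → x i ≤ x j := by
    intro i j hi hij hjN
    induction j with
    | zero => omega
    | succ j ih =>
      rcases Nat.lt_or_ge i (j+1) with h | h
      · have h1 : x j ≤ x (j+1) := by
          rcases Nat.lt_or_ge j 1 with hj | hj
          · interval_cases j <;> omega
          · exact (hinc j hj (by omega)).le
        exact le_trans (ih (by omega) (by omega)) h1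
      · have : i = j + 1 := by omega
        simp [this]
  have hIco : ∀ k, 1 ≤ k → k ≤ N → x k ∈ Set.Ico 0 L := by
    intro k hk hkN
    exact ⟨le_trans hx1 (hmono 1 k le_rfl hk hkN),
      lt_of_le_of_lt (hmono k N hk hkN le_rfl) hxN⟩
  have hgap : ∀ k, 1 ≤ k → k ≤ N → 0 < cgap L N x k := by
    intro k hk hkN
    unfold cgap
    split
    · next h => linarith [hinc k hk h]
    · next h =>
      have : k = N := by omega
      linarith
  -- sum of gaps
  have hsum : ∑ k ∈ Finset.Icc 1 N, cgap L N x k = L := by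
    obtain ⟨M, rfl⟩ : ∃ M, N = M + 1 := ⟨N-1, by omega⟩
    rw [Finset.sum_Icc_succ_top (by omega)]
    have h1 : ∑ k ∈ Finset.Icc 1 M, cgap L (M+1) x k
        = ∑ k ∈ Finset.Icc 1 M, (x (k+1) - x k) := by
      apply Finset.sum_congr rfl
      intro k hk
      simp only [Finset.mem_Icc] at hk
      unfold cgap
      rw [if_pos (by omega)]
    have h2 : ∀ K : ℕ, ∑ k ∈ Finset.Icc 1 K, (x (k+1) - x k) = x (K+1) - x 1 := by
      intro K
      induction K with
      | zero => simp
      | succ K ih => rw [Finset.sum_Icc_succ_top (by omega), ih]; ring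
    have h3 : cgap L (M+1) x (M+1) = L - x (M+1) + x 1 := by
      unfold cgap; rw [if_neg (by omega)]
    rw [h1, h2 M, h3]; ring
  set g : ℕ → ℝ := fun k => fpow a (cgap L N x k) with hg
  -- chain bound
  have hchain : ∀ i, 1 ≤ i → i ≤ N → |g i - g 1| ≤ (i:ℝ) * C := by
    intro i hi
    induction i, hi using Nat.le_induction with
    | base => intro _; simpa using by positivity
    | succ i hi ih =>
      intro hiN
      have heq := hfix (i+1) (by omega) hiN
      rw [if_neg (by omega)] at heq
      have hprev : i + 1 - 1 = i := by omega
      rw [hprev] at heq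
      have : g (i+1) - g 1 = (g i - g 1) + F (x (i+1)) := by
        simp only [hg]; linarith
      rw [this]
      have hFb : |F (x (i+1))| ≤ C := hF _ (hIco (i+1) (by omega) hiN)
      calc |(g i - g 1) + F (x (i+1))| ≤ |g i - g 1| + |F (x (i+1))| := abs_add_le _ _
        _ ≤ (i:ℝ) * C + C := add_le_add (ih (by omega)) hFb
        _ = ((i:ℕ)+1 : ℝ) * C := by ring
        _ = ((i+1 : ℕ) : ℝ) * C := by push_cast; ring
  have hchain2 : ∀ i j, 1 ≤ i → i ≤ N → 1 ≤ j → j ≤ N → |g i - g j| ≤ 2 * N * C := by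
    intro i j hi hiN hj hjN
    have h1 := hchain i hi hiN
    have h2 := hchain j hj hjN
    have hiC : (i:ℝ) * C ≤ (N:ℝ) * C := by
      apply mul_le_mul_of_nonneg_right _ hC; exact_mod_cast hiN
    have hjC : (j:ℝ) * C ≤ (N:ℝ) * C := by
      apply mul_le_mul_of_nonneg_right _ hC; exact_mod_cast hjN
    calc |g i - g j| ≤ |g i - g 1| + |g 1 - g j| := abs_sub_le _ _ _
      _ = |g i - g 1| + |g j - g 1| := by rw [abs_sub_comm (g 1)]
      _ ≤ 2 * N * C := by linarith
  -- pigeonhole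
  have hne : (Finset.Icc 1 N).Nonempty := ⟨1, by simp [Finset.mem_Icc]; omega⟩
  have hcard : (Finset.Icc 1 N).card = N := by simp
  have hconstsum : ∑ _k ∈ Finset.Icc 1 N, L / N = L := by
    rw [Finset.sum_const, hcard, nsmul_eq_mul]
    field_simp
  obtain ⟨m, hm, hmle⟩ : ∃ m ∈ Finset.Icc 1 N, cgap L N x m ≤ L / N := by
    apply Finset.exists_le_of_sum_le hne
    rw [hsum, hconstsum]
  obtain ⟨M, hM, hMle⟩ : ∃ M ∈ Finset.Icc 1 N, L / N ≤ cgap L N x M := by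
    apply Finset.exists_le_of_sum_le hne
    rw [hsum, hconstsum]
  simp only [Finset.mem_Icc] at hm hM
  have hLN : (0:ℝ) < L / N := div_pos hL hNpos
  have hNL : (0:ℝ) < (N:ℝ) / L := div_pos hNpos hL
  have hLNa : (L / N) ^ (-a) = ((N:ℝ)/L) ^ a := by
    rw [Real.rpow_neg hLN.le, ← Real.inv_rpow hLN.le, inv_div]
  have hgm : ((N:ℝ)/L) ^ a ≤ g m := by
    rw [← hLNa]
    exact Real.rpow_le_rpow_of_nonpos (hgap m hm.1 hm.2) hmle (by linarith)
  have hgM : g M ≤ ((N:ℝ)/L) ^ a := by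
    rw [← hLNa]
    exact Real.rpow_le_rpow_of_nonpos hLN hMle (by linarith)
  -- main bounds
  intro i hi hiN
  have hgl : (1 - δ) * ((N:ℝ)/L) ^ a ≤ g i := by
    have := hchain2 m i hm.1 hm.2 hi hiN
    have h := abs_sub_le_iff.mp this
    nlinarith [h.1, h.2]
  have hgu : g i ≤ (1 + δ) * ((N:ℝ)/L) ^ a := by
    have := hchain2 i M hi hiN hM.1 hM.2
    have h := abs_sub_le_iff.mp this
    nlinarith [h.1, h.2]
  set t : ℝ := (N:ℝ) * cgap L N x i / L with ht
  have htpos : 0 < t := by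
    have := hgap i hi hiN
    positivity
  have hΔ : cgap L N x i = t * (L / N) := by
    rw [ht]; field_simp
  have hgt : g i = t ^ (-a) * ((N:ℝ)/L) ^ a := by
    simp only [hg, fpow]
    rw [hΔ, Real.mul_rpow htpos.le hLN.le, hLNa]
  have hNLa : (0:ℝ) < ((N:ℝ)/L) ^ a := Real.rpow_pos_of_pos hNL a
  have htl : 1 - δ ≤ t ^ (-a) := by
    rw [hgt] at hgl
    exact le_of_mul_le_mul_right (by linarith) hNLa
  have htu : t ^ (-a) ≤ 1 + δ := by
    rw [hgt] at hgu
    exact le_of_mul_le_mul_right (by linarith) hNLa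
  rw [abs_sub_lt_iff]
  constructor
  · -- t < 1 + ε
    by_contra h
    push_neg at h
    have h1 : 1 + ε ≤ t := by linarith
    have : t ^ (-a) ≤ (1+ε) ^ (-a) :=
      Real.rpow_le_rpow_of_nonpos (by linarith) h1 (by linarith)
    linarith
  · -- 1 - ε < t
    by_contra h
    push_neg at h
    have h1 : t ≤ 1 - ε := by linarith
    have : (1-ε) ^ (-a) ≤ t ^ (-a) :=
      Real.rpow_le_rpow_of_nonpos htpos h1 (by linarith)
    linarith


/-- For a bounded force `F` on the circle and a sequence of fixed
configurations with `N_p → ∞`, the gaps satisfy `Δ_i^{(p)} ~ L / N_p` uniformly in `i`. -/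
theorem gaps_uniformly_asymptotic (a L C : ℝ) (ha : 1 < a) (hL : 0 < L) (F : ℝ → ℝ)
    (hF : ∀ y ∈ Set.Ico (0 : ℝ) L, |F y| ≤ C)
    (Nseq : ℕ → ℕ) (hN : Tendsto Nseq atTop atTop)
    (x : ℕ → ℕ → ℝ) (hx : ∀ p, CircleFixedA a L F (Nseq p) (x p)) :
    ∀ ε > 0, ∃ P : ℕ, ∀ p ≥ P, ∀ i, 1 ≤ i → i ≤ Nseq p →
      |(Nseq p : ℝ) * cgap L (Nseq p) (x p) i / L - 1| < ε := by
  intro ε hε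
  set ε' : ℝ := min ε (1/2) with hε'def
  have hε'0 : 0 < ε' := lt_min hε (by norm_num)
  have hε'1 : ε' < 1 := lt_of_le_of_lt (min_le_right _ _) (by norm_num)
  have hε'ε : ε' ≤ ε := min_le_left _ _
  have hA : (0:ℝ) < 1 - (1+ε') ^ (-a) := by
    have := Real.rpow_lt_one_of_one_lt_of_neg (by linarith : (1:ℝ) < 1+ε')
      (by linarith : -a < 0)
    linarith
  have hB : (0:ℝ) < (1-ε') ^ (-a) - 1 := by
    have := Real.one_lt_rpow_of_pos_of_lt_one_of_neg (by linarith : (0:ℝ) < 1-ε')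
      (by linarith : 1-ε' < 1) (by linarith : -a < 0)
    linarith
  set δ : ℝ := min (1 - (1+ε') ^ (-a)) ((1-ε') ^ (-a) - 1) / 2 with hδdef
  have hδ0 : 0 < δ := by
    apply div_pos (lt_min hA hB) (by norm_num)
  have hmin1 := min_le_left (1 - (1+ε') ^ (-a)) ((1-ε') ^ (-a) - 1)
  have hmin2 := min_le_right (1 - (1+ε') ^ (-a)) ((1-ε') ^ (-a) - 1)
  have hδa : (1+ε') ^ (-a) < 1 - δ := by rw [hδdef]; linarith
  have hδb : 1 + δ < (1-ε') ^ (-a) := by rw [hδdef]; linarith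
  -- eventual largeness of N
  have htend : Tendsto (fun p => ((Nseq p : ℝ)) ^ (a-1)) atTop atTop :=
    (tendsto_rpow_atTop (by linarith : 0 < a - 1)).comp
      (tendsto_natCast_atTop_atTop.comp hN)
  have h1 : ∀ᶠ p in atTop, 2*C*L^a/δ ≤ (Nseq p : ℝ) ^ (a-1) :=
    htend.eventually_ge_atTop _
  have h2 : ∀ᶠ p in atTop, 1 ≤ Nseq p := hN.eventually_ge_atTop 1
  obtain ⟨P, hP⟩ := eventually_atTop.mp (h1.and h2)
  refine ⟨P, fun p hp i hi hiN => ?_⟩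
  obtain ⟨hNa, hN1⟩ := hP p hp
  set N := Nseq p with hNdef
  have hNpos : (0:ℝ) < N := by exact_mod_cast hN1
  have hLa : (0:ℝ) < L ^ a := Real.rpow_pos_of_pos hL a
  have hkey : 2*C*L^a ≤ δ * (N:ℝ)^(a-1) := by
    rw [div_le_iff₀ hδ0] at hNa
    linarith
  have hpow : (N:ℝ)^a = (N:ℝ)^(a-1) * (N:ℝ) := by
    have h := Real.rpow_add hNpos (a-1) 1
    rw [Real.rpow_one] at h
    rw [← h]; norm_num
  have hNC : 2 * N * C ≤ δ * ((N:ℝ)/L) ^ a := by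
    have hsplit : ((N:ℝ)/L) ^ a = (N:ℝ)^(a-1) * (N:ℝ) / L^a := by
      rw [Real.div_rpow (Nat.cast_nonneg _) hL.le, hpow]
    rw [hsplit]
    have hstep : 2*(N:ℝ)*C*L^a ≤ δ * ((N:ℝ)^(a-1) * N) :=  by
      nlinarith [mul_le_mul_of_nonneg_right hkey hNpos.le]
    calc 2*(N:ℝ)*C = 2*(N:ℝ)*C*L^a/L^a := by field_simp
      _ ≤ δ * ((N:ℝ)^(a-1) * N)/L^a := by gcongr
      _ = δ * ((N:ℝ)^(a-1) * N / L^a) := by ring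
  exact lt_of_lt_of_le
    (core_gaps a L C ha hL F hF ε' δ hδ0 hδa hδb hε'0 hε'1 N hN1 hNC (x p) (hx p) i hi hiN)
    hε'ε
end

section
/- Let F be a bounded, left-continuous function on the circle of circumference L with only finitely many discontinuities. If there exists a sequence N_p → ∞ such that for every p there is at least one fixed configuration (x_1^{(p)}, ..., x_{N_p}^{(p)}) on the circle, then ∫_0^L F(x) dx = 0, i.e. the force F is potential on the circle. -/
open Real Filter Set Asymptotics

/-!
Summing the equilibrium equations gives `∑ F (x k) = 0`, and their partial sums show that the
values `f (Δ k)` lie within `2 N C` of each other, where `|F| ≤ C`. Some gap is at most `L / N`,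
so every gap satisfies `f (Δ k) ≥ (N / L) ^ a - 2 N C`, i.e.
`Δ k ≤ δ_N := ((N / L) ^ a - 2 N C) ^ (-1 / a)`; since `a > 1`, `N δ_N → L`. Hence the Riemann
sums `∑ F (x k) Δ k = ∑ F (x k) (Δ k - L / N)` are at most `2 C (N δ_N - L) → 0` in absolute
value. On the other hand the mesh `δ_N` tends to `0`, so the left-endpoint step functions
converge to `F` at every continuity point of `F`, i.e. almost everywhere, and by dominated
convergence the Riemann sums tend to `∫ F`.
-/

open MeasureTheory Topology

theorem sum_abs_le_of_sum_eq_zero {ι : Type*} {s : Finset ι} {t : ι → ℝ} {m : ℝ}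
    (h0 : ∑ i ∈ s, t i = 0) (hle : ∀ i ∈ s, t i ≤ m) :
    ∑ i ∈ s, |t i| ≤ 2 * s.card * m := by
  rcases s.eq_empty_or_nonempty with rfl | hs
  · simp
  obtain ⟨i, hi, hti⟩ :=
    Finset.exists_le_of_sum_le (f := fun _ => (0 : ℝ)) (g := t) hs (by simp [h0])
  have hm : 0 ≤ m := hti.trans (hle i hi)
  calc ∑ i ∈ s, |t i| = ∑ i ∈ s, (|t i| + t i) := by rw [Finset.sum_add_distrib, h0, add_zero]
    _ ≤ ∑ _i ∈ s, 2 * m := Finset.sum_le_sum fun i hi => by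
        have := hle i hi
        rcases abs_cases (t i) with ⟨h, _⟩ | ⟨h, _⟩ <;> linarith
    _ = 2 * s.card * m := by rw [Finset.sum_const, nsmul_eq_mul]; ring

theorem abs_sum_mul_le_of_sum_eq_zero {ι : Type*} {s : Finset ι} {w g : ι → ℝ} {C δ : ℝ}
    (hw0 : ∑ i ∈ s, w i = 0) (hw : ∀ i ∈ s, |w i| ≤ C) (hg : ∀ i ∈ s, g i ≤ δ) :
    |∑ i ∈ s, w i * g i| ≤ 2 * C * (s.card * δ - ∑ i ∈ s, g i) := by
  rcases s.eq_empty_or_nonempty with rfl | ⟨i₀, hi₀⟩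
  · simp
  have hC : 0 ≤ C := (abs_nonneg _).trans (hw i₀ hi₀)
  have hcard : (s.card : ℝ) ≠ 0 := by exact_mod_cast (Finset.card_pos.2 ⟨i₀, hi₀⟩).ne'
  set c := (∑ i ∈ s, g i) / s.card
  have hc : s.card * c = ∑ i ∈ s, g i := mul_div_cancel₀ _ hcard
  have hcentre : ∑ i ∈ s, w i * g i = ∑ i ∈ s, w i * (g i - c) := by
    simp only [mul_sub, Finset.sum_sub_distrib, ← Finset.sum_mul, hw0, zero_mul, sub_zero]
  have hmean : ∑ i ∈ s, (g i - c) = 0 := by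
    rw [Finset.sum_sub_distrib, Finset.sum_const, nsmul_eq_mul, hc, sub_self]
  calc |∑ i ∈ s, w i * g i| ≤ ∑ i ∈ s, C * |g i - c| := by
        rw [hcentre]
        refine (Finset.abs_sum_le_sum_abs _ _).trans (Finset.sum_le_sum fun i hi => ?_)
        rw [abs_mul]
        exact mul_le_mul_of_nonneg_right (hw i hi) (abs_nonneg _)
    _ ≤ C * (2 * s.card * (δ - c)) := by
        rw [← Finset.mul_sum]
        gcongr
        exact sum_abs_le_of_sum_eq_zero hmean fun i hi => by linarith [hg i hi]
    _ = 2 * C * (s.card * δ - ∑ i ∈ s, g i) := by rw [← hc]; ring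

theorem fpow_le_fpow_of_le {a r s : ℝ} (ha : 0 ≤ a) (hr : 0 < r) (hrs : r ≤ s) :
    fpow a s ≤ fpow a r :=
  Real.rpow_le_rpow_of_nonpos hr hrs (neg_nonpos.2 ha)

theorem le_rpow_inv_of_le_fpow {a r M : ℝ} (ha : 0 < a) (hr : 0 < r) (hM : 0 < M)
    (h : M ≤ fpow a r) : r ≤ M ^ (-a)⁻¹ :=
  (Real.le_rpow_inv_iff_of_neg hr hM (neg_neg_of_pos ha)).2 h

theorem exists_mem_Ico_of_le_of_lt (x : ℕ → ℝ) {y : ℝ} {m n : ℕ} (hmn : m ≤ n)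
    (hm : x m ≤ y) (hn : y < x n) : ∃ k ∈ Finset.Ico m n, y ∈ Ico (x k) (x (k + 1)) := by
  induction n, hmn using Nat.le_induction with
  | base => exact absurd hn (not_lt.2 hm)
  | succ n hmn ih =>
    by_cases hyn : y < x n
    · obtain ⟨k, hk, hy⟩ := ih hyn
      exact ⟨k, Finset.Ico_subset_Ico_right n.le_succ hk, hy⟩
    · exact ⟨n, Finset.mem_Ico.2 ⟨hmn, n.lt_succ_self⟩, not_lt.1 hyn, hn⟩

section Gaps

variable {L : ℝ} {N : ℕ} {x : ℕ → ℝ}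

theorem cgap_of_lt {k : ℕ} (hk : k < N) : cgap L N x k = x (k + 1) - x k := if_pos hk

theorem cgap_self : cgap L N x N = L - x N + x 1 := if_neg (lt_irrefl N)

theorem sum_cgap (hN : 1 ≤ N) : ∑ k ∈ Finset.Icc 1 N, cgap L N x k = L := by
  rw [← Finset.Ico_add_one_right_eq_Icc, Finset.sum_Ico_succ_top hN,
    Finset.sum_congr rfl fun k hk => cgap_of_lt (Finset.mem_Ico.1 hk).2,
    Finset.sum_Ico_sub (f := x) hN, cgap_self]
  ring

theorem exists_cgap_le (hN : 1 ≤ N) : ∃ k ∈ Finset.Icc 1 N, cgap L N x k ≤ L / N := by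
  refine Finset.exists_le_of_sum_le ⟨1, Finset.mem_Icc.2 ⟨le_rfl, hN⟩⟩ ?_
  have hN' : (N : ℝ) ≠ 0 := by positivity
  rw [sum_cgap hN, Finset.sum_const, Nat.card_Icc, Nat.add_sub_cancel, nsmul_eq_mul,
    mul_div_cancel₀ _ hN']

end Gaps

namespace CircleConfigA

variable {L : ℝ} {N : ℕ} {x : ℕ → ℝ}

theorem apply_le_apply (h : CircleConfigA L N x) ⦃j k : ℕ⦄ (hj : 1 ≤ j) (hjk : j ≤ k)
    (hk : k ≤ N) : x j ≤ x k := by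
  refine (strictMonoOn_of_lt_succ Set.ordConnected_Icc fun i _ hi hi' => ?_).monotoneOn
    ⟨hj, hjk.trans hk⟩ ⟨hj.trans hjk, hk⟩ hjk
  rw [Order.succ_eq_add_one] at hi' ⊢
  exact h.2.1 i hi.1 hi'.2

theorem mem_Ico (h : CircleConfigA L N x) {k : ℕ} (hk : k ∈ Finset.Icc 1 N) : x k ∈ Ico 0 L := by
  obtain ⟨hk1, hkN⟩ := Finset.mem_Icc.1 hk
  exact ⟨h.1.trans (h.apply_le_apply le_rfl hk1 hkN),
    (h.apply_le_apply hk1 hkN le_rfl).trans_lt h.2.2⟩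

theorem cgap_pos (h : CircleConfigA L N x) {k : ℕ} (hk : k ∈ Finset.Icc 1 N) :
    0 < cgap L N x k := by
  obtain ⟨hk1, hkN⟩ := Finset.mem_Icc.1 hk
  rcases hkN.lt_or_eq with hkN | rfl
  · rw [cgap_of_lt hkN]
    exact sub_pos.2 (h.2.1 k hk1 hkN)
  · rw [cgap_self]
    linarith [h.1, h.2.2]

end CircleConfigA

-- For small `N` the base is negative and `rpow` gives a junk value; the bound is only used once
-- the base is positive, which holds for all large `N` (`eventually_fpow_sub_pos`).
noncomputable def meshBound (a L C : ℝ) (N : ℕ) : ℝ := (fpow a (L / N) - 2 * N * C) ^ (-a)⁻¹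

namespace CircleFixedA

variable {a L C : ℝ} {F : ℝ → ℝ} {N : ℕ} {x : ℕ → ℝ}

theorem fpow_cgap_eq (h : CircleFixedA a L F N x) {k : ℕ} (hk1 : 1 ≤ k) (hkN : k ≤ N) :
    fpow a (cgap L N x k) = fpow a (cgap L N x N) + ∑ j ∈ Finset.Icc 1 k, F (x j) := by
  induction k, hk1 using Nat.le_induction with
  | base =>
    have heq := h.2 1 le_rfl hkN
    rw [if_pos rfl] at heq
    rw [Finset.Icc_self, Finset.sum_singleton]
    linarith
  | succ k hk ih =>
    have heq := h.2 (k + 1) (by omega) hkN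
    rw [if_neg (by omega), Nat.add_sub_cancel] at heq
    rw [Finset.sum_Icc_succ_top (by omega)]
    linarith [ih (by omega)]

theorem sum_force_eq_zero (h : CircleFixedA a L F N x) (hN : 1 ≤ N) :
    ∑ k ∈ Finset.Icc 1 N, F (x k) = 0 := by
  linarith [h.fpow_cgap_eq hN le_rfl]

theorem abs_sum_force_le (h : CircleFixedA a L F N x) (hFb : ∀ y ∈ Ico 0 L, |F y| ≤ C)
    (hC : 0 ≤ C) {k : ℕ} (hkN : k ≤ N) : |∑ j ∈ Finset.Icc 1 k, F (x j)| ≤ N * C := by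
  calc |∑ j ∈ Finset.Icc 1 k, F (x j)| ≤ ∑ j ∈ Finset.Icc 1 k, |F (x j)| :=
        Finset.abs_sum_le_sum_abs _ _
    _ ≤ k * C := by
        simpa using Finset.sum_le_card_nsmul _ _ C fun j hj =>
          hFb _ (h.1.mem_Ico (Finset.Icc_subset_Icc_right hkN hj))
    _ ≤ N * C := by gcongr

theorem fpow_cgap_sub_le (h : CircleFixedA a L F N x) (hFb : ∀ y ∈ Ico 0 L, |F y| ≤ C)
    (hC : 0 ≤ C) {j k : ℕ} (hj : j ∈ Finset.Icc 1 N) (hk : k ∈ Finset.Icc 1 N) :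
    fpow a (cgap L N x j) - 2 * N * C ≤ fpow a (cgap L N x k) := by
  obtain ⟨hj1, hjN⟩ := Finset.mem_Icc.1 hj
  obtain ⟨hk1, hkN⟩ := Finset.mem_Icc.1 hk
  have hSj := abs_le.1 (h.abs_sum_force_le hFb hC hjN)
  have hSk := abs_le.1 (h.abs_sum_force_le hFb hC hkN)
  rw [h.fpow_cgap_eq hj1 hjN, h.fpow_cgap_eq hk1 hkN]
  linarith [hSj.2, hSk.1]

theorem cgap_le_meshBound (h : CircleFixedA a L F N x) (ha : 0 < a)
    (hFb : ∀ y ∈ Ico 0 L, |F y| ≤ C) (hC : 0 ≤ C) (hN : 1 ≤ N)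
    (hpos : 0 < fpow a (L / N) - 2 * N * C) {k : ℕ} (hk : k ∈ Finset.Icc 1 N) :
    cgap L N x k ≤ meshBound a L C N := by
  obtain ⟨k₀, hk₀, hsmall⟩ := exists_cgap_le (L := L) (x := x) hN
  refine le_rpow_inv_of_le_fpow ha (h.1.cgap_pos hk) hpos ?_
  calc fpow a (L / N) - 2 * N * C ≤ fpow a (cgap L N x k₀) - 2 * N * C := by
        gcongr
        exact fpow_le_fpow_of_le ha.le (h.1.cgap_pos hk₀) hsmall
    _ ≤ fpow a (cgap L N x k) := h.fpow_cgap_sub_le hFb hC hk₀ hk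

theorem abs_sum_force_mul_cgap_le (h : CircleFixedA a L F N x) (ha : 0 < a)
    (hFb : ∀ y ∈ Ico 0 L, |F y| ≤ C) (hC : 0 ≤ C) (hN : 1 ≤ N)
    (hpos : 0 < fpow a (L / N) - 2 * N * C) :
    |∑ k ∈ Finset.Icc 1 N, F (x k) * cgap L N x k| ≤ 2 * C * (N * meshBound a L C N - L) := by
  have := abs_sum_mul_le_of_sum_eq_zero (h.sum_force_eq_zero hN)
    (fun k hk => hFb _ (h.1.mem_Ico hk)) fun k hk => h.cgap_le_meshBound ha hFb hC hN hpos hk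
  rwa [Nat.card_Icc, Nat.add_sub_cancel, sum_cgap hN] at this

end CircleFixedA

section MeshBound

variable {a L C : ℝ}

theorem rpow_neg_mul_fpow_sub (hL : 0 < L) {N : ℕ} (hN : 0 < N) :
    (N : ℝ) ^ (-a) * (fpow a (L / N) - 2 * N * C) = L ^ (-a) - 2 * C * (N : ℝ) ^ (1 - a) := by
  have hN' : (0 : ℝ) < N := Nat.cast_pos.2 hN
  rw [mul_sub, fpow, ← Real.mul_rpow hN'.le (by positivity), mul_div_cancel₀ _ hN'.ne',
    show 1 - a = -a + 1 by ring, Real.rpow_add_one hN'.ne']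
  ring

theorem tendsto_rpow_neg_mul_fpow_sub (ha : 1 < a) (hL : 0 < L) :
    Tendsto (fun N : ℕ => (N : ℝ) ^ (-a) * (fpow a (L / N) - 2 * N * C)) atTop
      (𝓝 (L ^ (-a))) := by
  have h : Tendsto (fun N : ℕ => (N : ℝ) ^ (1 - a)) atTop (𝓝 0) := by
    simpa only [neg_sub, Function.comp_def] using
      (tendsto_rpow_neg_atTop (sub_pos.2 ha)).comp tendsto_natCast_atTop_atTop
  have h' := (tendsto_const_nhds (x := L ^ (-a))).sub (h.const_mul (2 * C))
  rw [mul_zero, sub_zero] at h'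
  refine h'.congr' ?_
  filter_upwards [eventually_gt_atTop 0] with N hN
  exact (rpow_neg_mul_fpow_sub hL hN).symm

theorem eventually_fpow_sub_pos (ha : 1 < a) (hL : 0 < L) :
    ∀ᶠ N : ℕ in atTop, 0 < fpow a (L / N) - 2 * N * C := by
  filter_upwards [(tendsto_rpow_neg_mul_fpow_sub ha hL).eventually_const_lt
    (Real.rpow_pos_of_pos hL (-a))] with N hpos
  exact pos_of_mul_pos_right hpos (by positivity)

theorem natCast_mul_meshBound {N : ℕ} (ha : a ≠ 0) (hpos : 0 ≤ fpow a (L / N) - 2 * N * C) :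
    N * meshBound a L C N = ((N : ℝ) ^ (-a) * (fpow a (L / N) - 2 * N * C)) ^ (-a)⁻¹ := by
  rw [meshBound, Real.mul_rpow (by positivity) hpos,
    Real.rpow_rpow_inv (Nat.cast_nonneg N) (neg_ne_zero.2 ha)]

theorem tendsto_natCast_mul_meshBound (ha : 1 < a) (hL : 0 < L) :
    Tendsto (fun N : ℕ => N * meshBound a L C N) atTop (𝓝 L) := by
  have h := (tendsto_rpow_neg_mul_fpow_sub (C := C) ha hL).rpow_const (p := (-a)⁻¹)
    (Or.inl (Real.rpow_pos_of_pos hL _).ne')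
  rw [Real.rpow_rpow_inv hL.le (by linarith)] at h
  refine h.congr' ?_
  filter_upwards [eventually_fpow_sub_pos ha hL] with N hpos
  exact (natCast_mul_meshBound (by linarith) hpos.le).symm

theorem tendsto_meshBound (ha : 1 < a) (hL : 0 < L) :
    Tendsto (meshBound a L C) atTop (𝓝 0) := by
  have h := (tendsto_natCast_mul_meshBound (C := C) ha hL).mul
    (tendsto_inv_atTop_zero.comp tendsto_natCast_atTop_atTop)
  rw [mul_zero] at h
  refine h.congr' ?_
  filter_upwards [eventually_gt_atTop 0] with N hN
  simp only [Function.comp_apply]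
  field_simp

end MeshBound

noncomputable def riemannStep (L : ℝ) (F : ℝ → ℝ) (N : ℕ) (x : ℕ → ℝ) (y : ℝ) : ℝ :=
  ∑ k ∈ Finset.Ico 1 N, (Ico (x k) (x (k + 1))).indicator (fun _ => F (x k)) y
    + (Ico (x N) L).indicator (fun _ => F (x N)) y + (Ico 0 (x 1)).indicator (fun _ => F (x N)) y

theorem setIntegral_indicator_Ico_const {s : Set ℝ} {u v : ℝ} (huv : u ≤ v) (hsub : Ico u v ⊆ s)
    (c : ℝ) : ∫ y in s, (Ico u v).indicator (fun _ => c) y = c * (v - u) := by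
  rw [integral_indicator measurableSet_Ico, Measure.restrict_restrict measurableSet_Ico,
    inter_eq_left.2 hsub, setIntegral_const, Real.volume_real_Ico_of_le huv, smul_eq_mul, mul_comm]

section RiemannStep

variable {L C : ℝ} {F : ℝ → ℝ} {N : ℕ} {x : ℕ → ℝ}

theorem measurable_riemannStep : Measurable (riemannStep L F N x) := by
  unfold riemannStep
  fun_prop (disch := exact measurableSet_Ico)

namespace CircleConfigA

theorem riemannStep_of_mem_Ico (h : CircleConfigA L N x) {k : ℕ} (hk : k ∈ Finset.Ico 1 N)
    {y : ℝ} (hy : y ∈ Ico (x k) (x (k + 1))) : riemannStep L F N x y = F (x k) := by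
  obtain ⟨hk1, hkN⟩ := Finset.mem_Ico.1 hk
  have hle := h.apply_le_apply
  rw [riemannStep, Finset.sum_eq_single_of_mem k hk fun j hj hjk => ?_, indicator_of_mem hy,
    indicator_of_notMem fun h' => h'.1.not_gt (hy.2.trans_le (hle (by omega) hkN le_rfl)),
    indicator_of_notMem fun h' => h'.2.not_ge ((hle le_rfl hk1 hkN.le).trans hy.1)]
  · ring
  obtain ⟨hj1, hjN⟩ := Finset.mem_Ico.1 hj
  refine indicator_of_notMem (fun h' => ?_) _
  rcases hjk.lt_or_gt with hjk | hjk
  · exact h'.2.not_ge ((hle (by omega) hjk hkN.le).trans hy.1)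
  · exact h'.1.not_gt (hy.2.trans_le (hle (by omega) hjk hjN.le))

theorem riemannStep_of_le_or_lt (h : CircleConfigA L N x) (hN : 1 ≤ N) {y : ℝ}
    (hy : y ∈ Ico 0 L) (hwrap : x N ≤ y ∨ y < x 1) : riemannStep L F N x y = F (x N) := by
  have hle := h.apply_le_apply
  have h1N := hle le_rfl hN le_rfl
  rw [riemannStep, Finset.sum_eq_zero fun j hj => indicator_of_notMem (fun h' => ?_) _]
  · rcases hwrap with hwrap | hwrap
    · rw [indicator_of_mem (show y ∈ Ico (x N) L from ⟨hwrap, hy.2⟩),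
        indicator_of_notMem fun h' => h'.2.not_ge (h1N.trans hwrap)]
      ring
    · rw [indicator_of_notMem fun h' => h'.1.not_gt (hwrap.trans_le h1N),
        indicator_of_mem (show y ∈ Ico 0 (x 1) from ⟨hy.1, hwrap⟩)]
      ring
  obtain ⟨hj1, hjN⟩ := Finset.mem_Ico.1 hj
  rcases hwrap with hwrap | hwrap
  · exact h'.2.not_ge ((hle (by omega) hjN le_rfl).trans hwrap)
  · exact h'.1.not_gt (hwrap.trans_le (hle le_rfl hj1 hjN.le))

theorem abs_riemannStep_le (h : CircleConfigA L N x) (hN : 1 ≤ N)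
    (hFb : ∀ y ∈ Ico 0 L, |F y| ≤ C) {y : ℝ} (hy : y ∈ Ico 0 L) :
    |riemannStep L F N x y| ≤ C := by
  by_cases hwrap : x N ≤ y ∨ y < x 1
  · rw [h.riemannStep_of_le_or_lt hN hy hwrap]
    exact hFb _ (h.mem_Ico (Finset.mem_Icc.2 ⟨hN, le_rfl⟩))
  rw [not_or, not_le, not_lt] at hwrap
  obtain ⟨k, hk, hyk⟩ := exists_mem_Ico_of_le_of_lt x hN hwrap.2 hwrap.1
  rw [h.riemannStep_of_mem_Ico hk hyk]
  exact hFb _ (h.mem_Ico (Finset.Ico_subset_Icc_self hk))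

theorem exists_riemannStep_eq_of_cgap_le (h : CircleConfigA L N x) (hN : 1 ≤ N) {δ : ℝ}
    (hgap : ∀ k ∈ Finset.Icc 1 N, cgap L N x k ≤ δ) {y : ℝ} (hδy : δ < y) (hyδ : y < L - δ) :
    ∃ k, riemannStep L F N x y = F (x k) ∧ dist (x k) y ≤ δ := by
  -- the wrap-around gap `L - x N + x 1 ≤ δ` keeps `y` off the arc `[x N, L) ∪ [0, x 1)`
  have hwrap := hgap N (Finset.mem_Icc.2 ⟨hN, le_rfl⟩)
  rw [cgap_self] at hwrap
  obtain ⟨k, hk, hyk⟩ :=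
    exists_mem_Ico_of_le_of_lt x (y := y) hN (by linarith [h.2.2]) (by linarith [h.1])
  refine ⟨k, h.riemannStep_of_mem_Ico hk hyk, ?_⟩
  have hgk := hgap k (Finset.Ico_subset_Icc_self hk)
  rw [cgap_of_lt (Finset.mem_Ico.1 hk).2] at hgk
  rw [Real.dist_eq, abs_sub_comm, abs_of_nonneg (sub_nonneg.2 hyk.1)]
  linarith [hyk.2]

theorem setIntegral_riemannStep (h : CircleConfigA L N x) (hN : 1 ≤ N) :
    ∫ y in Ico 0 L, riemannStep L F N x y = ∑ k ∈ Finset.Icc 1 N, F (x k) * cgap L N x k := by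
  have hint : ∀ u v c : ℝ,
      Integrable ((Ico u v).indicator fun _ => c) (volume.restrict (Ico 0 L)) :=
    fun u v c => (integrable_const c).indicator measurableSet_Ico
  have hsum := integrable_finsetSum (Finset.Ico 1 N) fun k _ => hint (x k) (x (k + 1)) (F (x k))
  have hx1 := h.mem_Ico (Finset.mem_Icc.2 ⟨le_rfl, hN⟩)
  have hxN := h.mem_Ico (Finset.mem_Icc.2 ⟨hN, le_rfl⟩)
  have hpiece : ∀ k ∈ Finset.Ico 1 N,
      ∫ y in Ico 0 L, (Ico (x k) (x (k + 1))).indicator (fun _ => F (x k)) y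
        = F (x k) * cgap L N x k := by
    intro k hk
    obtain ⟨hk1, hkN⟩ := Finset.mem_Ico.1 hk
    rw [cgap_of_lt hkN]
    exact setIntegral_indicator_Ico_const (h.apply_le_apply hk1 k.le_succ hkN)
      (Ico_subset_Ico (h.mem_Ico (Finset.mem_Icc.2 ⟨hk1, hkN.le⟩)).1
        (h.mem_Ico (Finset.mem_Icc.2 ⟨by omega, hkN⟩)).2.le) _
  simp only [riemannStep]
  rw [integral_add (by exact hsum.add (hint _ _ _)) (hint _ _ _), integral_add hsum (hint _ _ _),
    integral_finsetSum _ fun k _ => hint _ _ _, Finset.sum_congr rfl hpiece,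
    setIntegral_indicator_Ico_const hxN.2.le (Ico_subset_Ico_left hxN.1),
    setIntegral_indicator_Ico_const hx1.1 (Ico_subset_Ico_right hx1.2.le),
    ← Finset.Ico_add_one_right_eq_Icc, Finset.sum_Ico_succ_top hN, cgap_self]
  ring

end CircleConfigA

end RiemannStep

section Convergence

variable {L C : ℝ} {F : ℝ → ℝ} {ι : Type*} {l : Filter ι} {Ns : ι → ℕ} {xs : ι → ℕ → ℝ}
  {δ : ι → ℝ}

theorem tendsto_riemannStep (hcfg : ∀ p, CircleConfigA L (Ns p) (xs p))
    (hgap : ∀ᶠ p in l, 1 ≤ Ns p ∧ ∀ k ∈ Finset.Icc 1 (Ns p), cgap L (Ns p) (xs p) k ≤ δ p)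
    (hδ : Tendsto δ l (𝓝 0)) {y : ℝ} (hy : y ∈ Ioo 0 L) (hFy : ContinuousAt F y) :
    Tendsto (fun p => riemannStep L F (Ns p) (xs p) y) l (𝓝 (F y)) := by
  rw [Metric.tendsto_nhds]
  intro ε hε
  obtain ⟨η, hη, hFη⟩ := Metric.continuousAt_iff.1 hFy ε hε
  have hpos : 0 < min η (min y (L - y)) := lt_min hη (lt_min hy.1 (sub_pos.2 hy.2))
  filter_upwards [hgap, hδ.eventually_lt_const hpos] with p ⟨hN, hg⟩ hδp
  simp only [lt_min_iff] at hδp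
  obtain ⟨k, hk, hdist⟩ :=
    (hcfg p).exists_riemannStep_eq_of_cgap_le (F := F) hN hg hδp.2.1 (by linarith [hδp.2.2])
  rw [hk]
  exact hFη (hdist.trans_lt hδp.1)

theorem tendsto_setIntegral_riemannStep [l.IsCountablyGenerated]
    (hcfg : ∀ p, CircleConfigA L (Ns p) (xs p))
    (hgap : ∀ᶠ p in l, 1 ≤ Ns p ∧ ∀ k ∈ Finset.Icc 1 (Ns p), cgap L (Ns p) (xs p) k ≤ δ p)
    (hδ : Tendsto δ l (𝓝 0)) (hFb : ∀ y ∈ Ico 0 L, |F y| ≤ C)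
    (hcont : ∀ᵐ y ∂volume.restrict (Ioo 0 L), ContinuousAt F y) :
    Tendsto (fun p => ∫ y in Ioo 0 L, riemannStep L F (Ns p) (xs p) y) l
      (𝓝 (∫ y in Ioo 0 L, F y)) := by
  refine tendsto_integral_filter_of_dominated_convergence (fun _ => C)
    (Eventually.of_forall fun p => measurable_riemannStep.aestronglyMeasurable) ?_
    (integrable_const C) ?_
  · filter_upwards [hgap] with p hp
    filter_upwards [ae_restrict_mem measurableSet_Ioo] with y hy
    exact (hcfg p).abs_riemannStep_le hp.1 hFb (Ioo_subset_Ico_self hy)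
  · filter_upwards [ae_restrict_mem measurableSet_Ioo, hcont] with y hy hFy
    exact tendsto_riemannStep hcfg hgap hδ hy hFy

end Convergence

theorem force_is_potential_general (a L C : ℝ) (ha : 1 < a) (hL : 0 < L) (F : ℝ → ℝ)
    (hFb : ∀ y ∈ Set.Ico (0 : ℝ) L, |F y| ≤ C)
    (hfin : {y ∈ Set.Ioo (0 : ℝ) L | ¬ ContinuousAt F y}.Finite)
    (Nseq : ℕ → ℕ) (hN : Tendsto Nseq atTop atTop)
    (x : ℕ → ℕ → ℝ) (hx : ∀ p, CircleFixedA a L F (Nseq p) (x p)) :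
    ∫ y in (0 : ℝ)..L, F y = 0 := by
  have hC : 0 ≤ C := (abs_nonneg _).trans (hFb 0 ⟨le_rfl, hL⟩)
  have hgood : ∀ᶠ p in atTop, 1 ≤ Nseq p ∧ 0 < fpow a (L / Nseq p) - 2 * Nseq p * C :=
    hN.eventually ((eventually_ge_atTop 1).and (eventually_fpow_sub_pos ha hL))
  have hcont : ∀ᵐ y ∂volume.restrict (Ioo 0 L), ContinuousAt F y := by
    rw [ae_restrict_iff' measurableSet_Ioo, ae_iff]
    simpa only [Classical.not_imp] using hfin.measure_zero volume
  have hlim := tendsto_setIntegral_riemannStep (fun p => (hx p).1)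
    (hgood.mono fun p hp => ⟨hp.1, fun k hk =>
      (hx p).cgap_le_meshBound (by linarith) hFb hC hp.1 hp.2 hk⟩)
    ((tendsto_meshBound ha hL).comp hN) hFb hcont
  have hzero : Tendsto (fun p => ∫ y in Ioo 0 L, riemannStep L F (Nseq p) (x p) y) atTop (𝓝 0) := by
    have hbound := ((tendsto_natCast_mul_meshBound (C := C) ha hL).comp hN).sub_const L
      |>.const_mul (2 * C)
    rw [sub_self, mul_zero] at hbound
    refine squeeze_zero_norm' ?_ hbound
    filter_upwards [hgood] with p hp
    rw [← integral_Ico_eq_integral_Ioo, (hx p).1.setIntegral_riemannStep hp.1, Real.norm_eq_abs]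
    exact (hx p).abs_sum_force_mul_cgap_le (by linarith) hFb hC hp.1 hp.2
  rw [intervalIntegral.integral_of_le hL.le, integral_Ioc_eq_integral_Ioo]
  exact tendsto_nhds_unique hlim hzero

/-- If `F` is bounded, left-continuous with finitely many discontinuities,
and fixed configurations exist for a sequence `N_p → ∞`, then `∫_0^L F = 0`. -/
theorem force_is_potential (a L C : ℝ) (ha : 1 < a) (hL : 0 < L) (F : ℝ → ℝ)
    (hFb : ∀ y ∈ Set.Ico (0 : ℝ) L, |F y| ≤ C)
    (hleft : ∀ y ∈ Set.Ioo (0 : ℝ) L, ContinuousWithinAt F (Set.Iio y) y)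
    (hfin : {y ∈ Set.Ioo (0 : ℝ) L | ¬ ContinuousAt F y}.Finite)
    (Nseq : ℕ → ℕ) (hN : Tendsto Nseq atTop atTop)
    (x : ℕ → ℕ → ℝ) (hx : ∀ p, CircleFixedA a L F (Nseq p) (x p)) :
    ∫ y in (0 : ℝ)..L, F y = 0 :=
  force_is_potential_general a L C ha hL F hFb hfin Nseq hN x hx
end

section
/- Suppose the force is piecewise constant with values F_1 on (0, M] and F_2 on (M, L], with F_1 ≠ 0 and the quotient F_2/F_1 irrational. Then for no N does a fixed configuration on the circle exist. -/
open Real Filter Set Asymptotics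

/-- For the piecewise constant force (`F₁` on `(0, M]`, `F₂` on `(M, L]`),
if `F₂ / F₁` is irrational there are no fixed configurations for any `N`. -/
theorem no_fixed_configuration_of_irrational (a L M F₁ F₂ : ℝ) (ha : 1 < a)
    (hM : 0 < M) (hML : M < L) (hF₁ : F₁ ≠ 0) (hirr : Irrational (F₂ / F₁)) :
    ∀ N : ℕ, 1 ≤ N →
      ¬ ∃ x : ℕ → ℝ, CircleFixedB a L (fun y => if y ≤ M then F₁ else F₂) N x := by
  intro N hN
  rintro ⟨x, _, heq⟩
  classical
  -- Sum of all equations is zero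
  have hsum : ∑ k ∈ Finset.Icc 1 N,
      (fpow a (cgap L N x (if k = 1 then N else k - 1)) +
        (if x k ≤ M then F₁ else F₂) - fpow a (cgap L N x k)) = 0 := by
    apply Finset.sum_eq_zero
    intro k hk
    rw [Finset.mem_Icc] at hk
    exact heq k hk.1 hk.2
  -- reindexing: k ↦ (if k = 1 then N else k - 1) is a bijection of Icc 1 N
  have hbij : ∑ k ∈ Finset.Icc 1 N, fpow a (cgap L N x (if k = 1 then N else k - 1))
      = ∑ k ∈ Finset.Icc 1 N, fpow a (cgap L N x k) := by
    apply Finset.sum_nbij' (fun k => if k = 1 then N else k - 1)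
      (fun k => if k = N then 1 else k + 1)
    · intro k hk
      rw [Finset.mem_Icc] at hk ⊢
      split
      · omega
      · omega
    · intro k hk
      rw [Finset.mem_Icc] at hk ⊢
      split
      · omega
      · omega
    · intro k hk
      rw [Finset.mem_Icc] at hk
      split_ifs <;> omega
    · intro k hk
      rw [Finset.mem_Icc] at hk
      split_ifs <;> omega
    · intro k hk; rfl
  rw [show ∀ s : Finset ℕ, ∀ A c B : ℕ → ℝ,
      (∑ k ∈ s, (A k + c k - B k)) = (∑ k ∈ s, A k) + (∑ k ∈ s, c k) - (∑ k ∈ s, B k)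
      from fun s A c B => by rw [Finset.sum_sub_distrib, Finset.sum_add_distrib]] at hsum
  rw [hbij] at hsum
  have hC : ∑ k ∈ Finset.Icc 1 N, (if x k ≤ M then F₁ else F₂) = 0 := by linarith
  -- split into the two populations
  set s := (Finset.Icc 1 N).filter (fun k => x k ≤ M) with hs
  set t := (Finset.Icc 1 N).filter (fun k => ¬ x k ≤ M) with ht
  have hsplit : (∑ k ∈ s, (if x k ≤ M then F₁ else F₂))
      + (∑ k ∈ t, (if x k ≤ M then F₁ else F₂)) = 0 := by
    rw [hs, ht, Finset.sum_filter_add_sum_filter_not]; exact hC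
  have hsF : ∑ k ∈ s, (if x k ≤ M then F₁ else F₂) = (s.card : ℝ) * F₁ := by
    have h1 : ∑ k ∈ s, (if x k ≤ M then F₁ else F₂) = ∑ k ∈ s, F₁ :=
      Finset.sum_congr rfl (fun k hk => by
        rw [hs, Finset.mem_filter] at hk; simp [hk.2])
    rw [h1, Finset.sum_const, nsmul_eq_mul]
  have htF : ∑ k ∈ t, (if x k ≤ M then F₁ else F₂) = (t.card : ℝ) * F₂ := by
    have h1 : ∑ k ∈ t, (if x k ≤ M then F₁ else F₂) = ∑ k ∈ t, F₂ :=
      Finset.sum_congr rfl (fun k hk => by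
        rw [ht, Finset.mem_filter] at hk; simp [hk.2])
    rw [h1, Finset.sum_const, nsmul_eq_mul]
  rw [hsF, htF] at hsplit
  have hcard : s.card + t.card = N := by
    rw [hs, ht, Finset.card_filter_add_card_filter_not, Nat.card_Icc]
    omega
  by_cases h2 : t.card = 0
  · have h1 : s.card = N := by omega
    rw [h2, h1] at hsplit
    simp at hsplit
    rcases hsplit with h | h
    · omega
    · exact hF₁ h
  · refine hirr ⟨-(s.card : ℚ) / (t.card : ℚ), ?_⟩
    have h2' : (t.card : ℝ) ≠ 0 := Nat.cast_ne_zero.mpr h2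
    push_cast
    field_simp
    linarith
end

section
/- Suppose the force is piecewise constant with values F_1 on (0, M] and F_2 on (M, L], with F_1 ≠ F_2. Then for fixed M, L, F_1, F_2 and a fixed total number N of particles, a fixed configuration on the circle can exist for at most one partition N = N_1 + N_2: any two fixed configurations with N particles have the same number N_1 of particles in (0, M] (and hence the same number N_2 in (M, L]). -/
open Real Filter Set Asymptotics

lemma sum_cycle (N : ℕ) (g : ℕ → ℝ) :
    ∑ k ∈ Finset.Icc 1 N, g (if k = 1 then N else k - 1) = ∑ k ∈ Finset.Icc 1 N, g k := by
  apply Finset.sum_nbij' (i := fun k => if k = 1 then N else k - 1)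
    (j := fun k => if k = N then 1 else k + 1)
  · intro k hk
    simp only [Finset.mem_Icc] at *
    split <;> omega
  · intro k hk
    simp only [Finset.mem_Icc] at *
    split <;> omega
  · intro k hk
    simp only [Finset.mem_Icc] at hk
    rcases eq_or_ne k 1 with h | h
    · simp [h]
    · simp only [if_neg h]
      have : k - 1 ≠ N := by omega
      rw [if_neg this]; omega
  · intro k hk
    simp only [Finset.mem_Icc] at hk
    rcases eq_or_ne k N with h | h
    · simp [h]
    · simp only [if_neg h]
      have : k + 1 ≠ 1 := by omega
      rw [if_neg this]; omega
  · intro k hk; rfl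

lemma fixed_sum (a L M F₁ F₂ : ℝ) (N : ℕ) (x : ℕ → ℝ)
    (hx : CircleFixedB a L (fun y => if y ≤ M then F₁ else F₂) N x) :
    ∑ k ∈ Finset.Icc 1 N, (if x k ≤ M then F₁ else F₂) = 0 := by
  have h := hx.2
  have hcong : ∀ k ∈ Finset.Icc 1 N, (if x k ≤ M then F₁ else F₂)
      = fpow a (cgap L N x k) - fpow a (cgap L N x (if k = 1 then N else k - 1)) := by
    intro k hk
    simp only [Finset.mem_Icc] at hk
    have h2 := h k hk.1 hk.2
    simp only at h2
    linarith
  rw [Finset.sum_congr rfl hcong, Finset.sum_sub_distrib,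
    sum_cycle N (fun k => fpow a (cgap L N x k)), sub_self]

/-- For fixed `M, L, F₁, F₂` (with `F₁ ≠ F₂`) and fixed `N`, any two fixed
configurations have the same number of particles in `(0, M]`. -/
theorem unique_partition (a L M F₁ F₂ : ℝ) (ha : 1 < a)
    (hM : 0 < M) (hML : M < L) (hF : F₁ ≠ F₂)
    (N : ℕ) (x x' : ℕ → ℝ)
    (hx : CircleFixedB a L (fun y => if y ≤ M then F₁ else F₂) N x)
    (hx' : CircleFixedB a L (fun y => if y ≤ M then F₁ else F₂) N x') :
    ((Finset.Icc 1 N).filter (fun i => x i ≤ M)).card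
      = ((Finset.Icc 1 N).filter (fun i => x' i ≤ M)).card := by
  have key : ∀ y : ℕ → ℝ, CircleFixedB a L (fun z => if z ≤ M then F₁ else F₂) N y →
      (((Finset.Icc 1 N).filter (fun i => y i ≤ M)).card : ℝ) * (F₁ - F₂) = - (N * F₂) := by
    intro y hy
    have hs := fixed_sum a L M F₁ F₂ N y hy
    rw [Finset.sum_ite, Finset.sum_const, Finset.sum_const] at hs
    have hcard := Finset.card_filter_add_card_filter_not
        (s := Finset.Icc 1 N) (p := fun i => y i ≤ M)
    rw [Nat.card_Icc] at hcard
    simp only [nsmul_eq_mul] at hs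
    have hcard' : (((Finset.Icc 1 N).filter (fun i => y i ≤ M)).card : ℝ)
        + (((Finset.Icc 1 N).filter (fun i => ¬ y i ≤ M)).card : ℝ) = N := by
      exact_mod_cast by omega
    linear_combination hs - F₂ * hcard'
  have h1 := key x hx
  have h2 := key x' hx'
  have hF' : F₁ - F₂ ≠ 0 := sub_ne_zero.mpr hF
  have : (((Finset.Icc 1 N).filter (fun i => x i ≤ M)).card : ℝ)
      = (((Finset.Icc 1 N).filter (fun i => x' i ≤ M)).card : ℝ) :=
    mul_right_cancel₀ hF' (h1.trans h2.symm)
  exact_mod_cast this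
end

section
/- Fix L > 0, M = L/2, F > 0, and the piecewise constant force F(x) = F on (0, M], F(x) = −F on (M, L]. Then for every odd N there is no fixed configuration on the circle with N particles. -/
open Real Filter Set Asymptotics

/-- For `M = L/2` and the force `F > 0` on `(0, M]`, `-F` on `(M, L]`,
there is no fixed configuration with an odd number of particles. -/
theorem no_fixed_configuration_odd (a L F : ℝ) (ha : 1 < a) (hL : 0 < L) (hF : 0 < F) :
    ∀ N : ℕ, Odd N →
      ¬ ∃ x : ℕ → ℝ, CircleFixedB a L (fun z => if z ≤ L / 2 then F else -F) N x := by
  intro N hN ⟨x, hconf, heq⟩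
  have hN1 : 1 ≤ N := hN.pos
  set g : ℕ → ℝ := fun k => fpow a (cgap L N x k) with hg
  -- Sum of all equations is zero
  have hsum : ∑ k ∈ Finset.Icc 1 N,
      (g (if k = 1 then N else k - 1) + (if x k ≤ L / 2 then F else -F) - g k) = 0 := by
    apply Finset.sum_eq_zero
    intro k hk
    rw [Finset.mem_Icc] at hk
    exact heq k hk.1 hk.2
  -- The shifted gap sum equals the plain gap sum
  have hshift : ∑ k ∈ Finset.Icc 1 N, g (if k = 1 then N else k - 1)
      = ∑ k ∈ Finset.Icc 1 N, g k := by
    apply Finset.sum_bij' (i := fun k _ => if k = 1 then N else k - 1)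
      (j := fun k _ => if k = N then 1 else k + 1)
    · intro k hk
      rw [Finset.mem_Icc] at hk ⊢
      split <;> omega
    · intro k hk
      rw [Finset.mem_Icc] at hk ⊢
      split <;> omega
    · intro k hk
      rw [Finset.mem_Icc] at hk
      by_cases h1 : k = 1
      · subst h1; simp
      · rw [if_neg h1, if_neg (by omega : ¬ k - 1 = N)]; omega
    · intro k hk
      rw [Finset.mem_Icc] at hk
      by_cases h1 : k = N
      · subst h1; simp
      · rw [if_neg h1, if_neg (by omega : ¬ k + 1 = 1)]; omega
    · intro k hk; rfl
  rw [Finset.sum_sub_distrib, Finset.sum_add_distrib, hshift] at hsum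
  have hFsum : ∑ k ∈ Finset.Icc 1 N, (if x k ≤ L / 2 then F else -F) = 0 := by
    linarith
  -- Split into counts
  set s := Finset.Icc 1 N with hs
  set t := s.filter (fun k => x k ≤ L / 2) with ht
  have hsplit : ∑ k ∈ s, (if x k ≤ L / 2 then F else -F)
      = (t.card : ℝ) * F + ((s.filter (fun k => ¬ x k ≤ L / 2)).card : ℝ) * (-F) := by
    rw [Finset.sum_ite, Finset.sum_const, Finset.sum_const]
    push_cast
    ring
  have hcard : t.card + (s.filter (fun k => ¬ x k ≤ L / 2)).card = s.card :=
    Finset.card_filter_add_card_filter_not (fun k => x k ≤ L / 2)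
  have hscard : s.card = N := by simp [hs]
  rw [hsplit] at hFsum
  have hne : F ≠ 0 := ne_of_gt hF
  have heqcard : (t.card : ℝ) = ((s.filter (fun k => ¬ x k ≤ L / 2)).card : ℝ) := by
    have : ((t.card : ℝ) - ((s.filter (fun k => ¬ x k ≤ L / 2)).card : ℝ)) * F = 0 := by
      linarith
    rcases mul_eq_zero.mp this with h | h
    · linarith
    · exact absurd h hne
  have : t.card = (s.filter (fun k => ¬ x k ≤ L / 2)).card := by exact_mod_cast heqcard
  obtain ⟨m, hm⟩ := hN
  omega
end

section
/- Let 0 < M < L, F_1 > 0 and F_2 < 0. Then for all sufficiently large N_1 and N_2 one can change the value of the piecewise constant force at one or two of the gap points M and L so that a fixed configuration exists with particles at the gap points: there exist real numbers G_M and G_L and a fixed configuration on the circle, for the force F̃ with F̃(x) = F_1 on (0, M), F̃(x) = F_2 on (M, L), F̃(M) = G_M, F̃(L) = G_L, which has the points M and L among its particles, with N_1 + 1 particles in [0, M] and N_2 + 1 particles in [M, L]. -/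
/-!
The fixed-point equations say that along the circle the values `f(Δ_k)` grow by `F(x_k)` at
each particle. Away from the gap points `M` and `L` they must therefore form arithmetic
progressions, with difference `F₁` on the first arc and `F₂` on the second, while the free
values `G_M`, `G_L` absorb the two jumps. It remains to fit the arcs: for any number `n ≥ 1` of
gaps and any length `ℓ > 0` there is an arithmetic progression `c + i d` of positive values with
`∑ (c + i d)^(-1/a) = ℓ`, by the intermediate value theorem in the starting value `c`.
-/

open Real Filter Set Asymptotics

theorem rpow_neg_inv_rpow_neg {x p : ℝ} (hx : 0 ≤ x) (hp : p ≠ 0) : (x ^ (-p⁻¹)) ^ (-p) = x := by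
  rw [neg_inv]
  exact rpow_inv_rpow hx (neg_ne_zero.2 hp)

theorem exists_pos_sum_add_rpow_neg_eq {ι : Type*} {s : Finset ι} {e : ι → ℝ} {p ℓ : ℝ}
    (hp : 0 < p) (hℓ : 0 < ℓ) (he : ∀ i ∈ s, 0 ≤ e i) (he₀ : ∃ i ∈ s, e i = 0) :
    ∃ c > 0, ∑ i ∈ s, (c + e i) ^ (-p) = ℓ := by
  obtain ⟨i₀, hi₀, hei₀⟩ := he₀
  have hcard : (1 : ℝ) ≤ s.card := by exact_mod_cast Finset.card_pos.2 ⟨i₀, hi₀⟩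
  have hneg : -p⁻¹ ≤ 0 := neg_nonpos.2 (inv_pos.2 hp).le
  -- At `c₀` the term with `e i₀ = 0` alone equals `ℓ`; at `c₁` every term is at most `ℓ / #s`.
  set c₀ := ℓ ^ (-p⁻¹)
  set c₁ := (ℓ / s.card) ^ (-p⁻¹)
  have hc₀ : 0 < c₀ := rpow_pos_of_pos hℓ _
  have hc₀₁ : c₀ ≤ c₁ :=
    rpow_le_rpow_of_nonpos (by positivity) (div_le_self hℓ.le hcard) hneg
  have hcont : ContinuousOn (fun c => ∑ i ∈ s, (c + e i) ^ (-p)) (Icc c₀ c₁) :=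
    continuousOn_finsetSum _ fun i hi =>
      (continuousOn_id.add continuousOn_const).rpow_const fun c hc =>
        Or.inl (by linarith [hc.1, he i hi] : (0 : ℝ) < c + e i).ne'
  have hlow : ℓ ≤ ∑ i ∈ s, (c₀ + e i) ^ (-p) := by
    calc ℓ = (c₀ + e i₀) ^ (-p) := by rw [hei₀, add_zero, rpow_neg_inv_rpow_neg hℓ.le hp.ne']
      _ ≤ _ := Finset.single_le_sum (f := fun i => (c₀ + e i) ^ (-p))
          (fun i hi => (rpow_pos_of_pos (by linarith [he i hi]) _).le) hi₀
  have hhigh : ∑ i ∈ s, (c₁ + e i) ^ (-p) ≤ ℓ := by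
    have hc₁ : 0 < c₁ := hc₀.trans_le hc₀₁
    calc ∑ i ∈ s, (c₁ + e i) ^ (-p) ≤ s.card • (ℓ / s.card) := by
          refine Finset.sum_le_card_nsmul _ _ _ fun i hi => ?_
          calc (c₁ + e i) ^ (-p) ≤ c₁ ^ (-p) :=
                rpow_le_rpow_of_nonpos hc₁ (le_add_of_nonneg_right (he i hi)) (by linarith)
            _ = ℓ / s.card := rpow_neg_inv_rpow_neg (by positivity) hp.ne'
      _ = ℓ := by rw [nsmul_eq_mul]; field_simp
  obtain ⟨c, hc, hsum⟩ := intermediate_value_Icc' hc₀₁ hcont ⟨hhigh, hlow⟩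
  exact ⟨c, hc₀.trans_le hc.1, hsum⟩

theorem exists_pos_sum_arithProg_rpow_neg_eq {p ℓ : ℝ} (hp : 0 < p) (hℓ : 0 < ℓ) {n : ℕ}
    (hn : 0 < n) (d : ℝ) :
    ∃ c, (∀ i < n, 0 < c + i * d) ∧ ∑ i ∈ Finset.range n, (c + i * d) ^ (-p) = ℓ := by
  set b := max 0 (-(((n : ℝ) - 1) * d))
  have hb₀ : 0 ≤ b := le_max_left _ _
  have hb₁ : -(((n : ℝ) - 1) * d) ≤ b := le_max_right _ _
  have he : ∀ i ∈ Finset.range n, 0 ≤ b + i * d := by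
    intro i hi
    have hin : (i : ℝ) + 1 ≤ n := by exact_mod_cast Finset.mem_range.1 hi
    rcases le_or_gt 0 d with hd | hd <;> nlinarith [(Nat.cast_nonneg i : (0 : ℝ) ≤ i)]
  have he₀ : ∃ i ∈ Finset.range n, b + i * d = 0 := by
    have hn' : (1 : ℝ) ≤ n := by exact_mod_cast hn
    rcases le_or_gt 0 d with hd | hd
    · refine ⟨0, Finset.mem_range.2 hn, ?_⟩
      simp [b, max_eq_left (by nlinarith : -(((n : ℝ) - 1) * d) ≤ 0)]
    · refine ⟨n - 1, Finset.mem_range.2 (by omega), ?_⟩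
      rw [Nat.cast_sub hn, Nat.cast_one, show b = -(((n : ℝ) - 1) * d) from
        max_eq_right (by nlinarith)]
      ring
  obtain ⟨c, hc, hsum⟩ := exists_pos_sum_add_rpow_neg_eq hp hℓ he he₀
  refine ⟨c + b, fun i hi => ?_, by simpa only [add_assoc] using hsum⟩
  linarith [he i (Finset.mem_range.2 hi)]

/-- Particle `k` sits at `partialSum g k`, so `g k` is the gap between particles `k` and `k + 1`,
and `g 0` the gap across the point `0 ≡ L`. -/
def partialSum (g : ℕ → ℝ) (k : ℕ) : ℝ := ∑ i ∈ Finset.range k, g i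

theorem partialSum_succ (g : ℕ → ℝ) (k : ℕ) : partialSum g (k + 1) = partialSum g k + g k :=
  Finset.sum_range_succ g k

theorem partialSum_one (g : ℕ → ℝ) : partialSum g 1 = g 0 :=
  Finset.sum_range_one g

theorem partialSum_lt_partialSum {g : ℕ → ℝ} {n i j : ℕ} (hg : ∀ k < n, 0 < g k) (hij : i < j)
    (hjn : j ≤ n) : partialSum g i < partialSum g j :=
  Finset.sum_lt_sum_of_subset (Finset.range_subset_range.2 hij.le) (Finset.mem_range.2 hij)
    (by simp) (hg i (hij.trans_le hjn))
    fun k hk _ => (hg k ((Finset.mem_range.1 hk).trans_le hjn)).le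

theorem cgap_partialSum {L : ℝ} {N k : ℕ} (g : ℕ → ℝ) (hk : k < N) :
    cgap L N (partialSum g) k = g k := by
  simp [cgap, hk, partialSum_succ]

theorem cgap_partialSum_self {L : ℝ} {N : ℕ} {g : ℕ → ℝ} (hL : partialSum g N = L) :
    cgap L N (partialSum g) N = g 0 := by
  simp [cgap, hL, partialSum_one]

theorem circleFixedB_partialSum {a L : ℝ} {F : ℝ → ℝ} {N : ℕ} {g : ℕ → ℝ} (hN : 0 < N)
    (hg : ∀ k < N, 0 < g k) (hL : partialSum g N = L)
    (hF : ∀ k, k + 1 < N → F (partialSum g (k + 1)) = fpow a (g (k + 1)) - fpow a (g k))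
    (hFL : F L = fpow a (g 0) - fpow a (g (N - 1))) :
    CircleFixedB a L F N (partialSum g) := by
  have hprev : ∀ k < N,
      cgap L N (partialSum g) (if k + 1 = 1 then N else k + 1 - 1) = g k := by
    rintro (_ | k) hk
    · simp [cgap_partialSum_self hL]
    · simp [cgap_partialSum g hk]
  refine ⟨⟨partialSum_one g ▸ hg 0 hN,
    fun k _ hk => partialSum_lt_partialSum hg k.lt_succ_self hk, hL.le⟩, ?_⟩
  rintro (_ | k) hk1 hkN
  · omega
  rw [hprev k hkN]
  rcases Nat.lt_or_eq_of_le hkN with hk | rfl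
  · rw [cgap_partialSum g hk, hF k hk]
    ring
  · rw [cgap_partialSum_self hL, hL, hFL, Nat.add_sub_cancel]
    ring

def ConstForceGaps (a d : ℝ) (n : ℕ) (g : ℕ → ℝ) : Prop :=
  (∀ i < n, 0 < g i) ∧ ∀ i, i + 1 < n → fpow a (g (i + 1)) = fpow a (g i) + d

theorem exists_constForceGaps {a ℓ : ℝ} (ha : 0 < a) (hℓ : 0 < ℓ) {n : ℕ} (hn : 0 < n) (d : ℝ) :
    ∃ g, ConstForceGaps a d n g ∧ partialSum g n = ℓ := by
  obtain ⟨c, hc, hsum⟩ := exists_pos_sum_arithProg_rpow_neg_eq (inv_pos.2 ha) hℓ hn d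
  have hfpow : ∀ i < n, fpow a ((c + i * d) ^ (-a⁻¹)) = c + i * d := fun i hi =>
    rpow_neg_inv_rpow_neg (hc i hi).le ha.ne'
  refine ⟨fun i => (c + i * d) ^ (-a⁻¹), ⟨fun i hi => rpow_pos_of_pos (hc i hi) _, ?_⟩, hsum⟩
  intro i hi
  rw [hfpow i (by omega), hfpow (i + 1) hi]
  push_cast
  ring

def gapAppend (g₁ g₂ : ℕ → ℝ) (n : ℕ) (k : ℕ) : ℝ := if k < n then g₁ k else g₂ (k - n)

theorem partialSum_gapAppend_of_le {g₁ g₂ : ℕ → ℝ} {n k : ℕ} (hk : k ≤ n) :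
    partialSum (gapAppend g₁ g₂ n) k = partialSum g₁ k :=
  Finset.sum_congr rfl fun _ hi => if_pos ((Finset.mem_range.1 hi).trans_le hk)

theorem partialSum_gapAppend_add (g₁ g₂ : ℕ → ℝ) (n m : ℕ) :
    partialSum (gapAppend g₁ g₂ n) (n + m) = partialSum g₁ n + partialSum g₂ m := by
  rw [partialSum, Finset.sum_range_add, ← partialSum, partialSum_gapAppend_of_le le_rfl]
  congr 1
  exact Finset.sum_congr rfl fun _ _ => by simp [gapAppend]

theorem circleFixedB_gapAppend {a L M F₁ F₂ : ℝ} {N₁ N₂ : ℕ} {g₁ g₂ : ℕ → ℝ} (hN₁ : 0 < N₁)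
    (hN₂ : 0 < N₂) (hML : M < L) (hg₁ : ConstForceGaps a F₁ N₁ g₁)
    (hg₂ : ConstForceGaps a F₂ N₂ g₂) (hM : partialSum (gapAppend g₁ g₂ N₁) N₁ = M)
    (hL : partialSum (gapAppend g₁ g₂ N₁) (N₁ + N₂) = L) :
    CircleFixedB a L
      (fun y => if y = M then fpow a (g₂ 0) - fpow a (g₁ (N₁ - 1))
        else if y = L then fpow a (g₁ 0) - fpow a (g₂ (N₂ - 1))
        else if y < M then F₁ else F₂)
      (N₁ + N₂) (partialSum (gapAppend g₁ g₂ N₁)) := by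
  set g := gapAppend g₁ g₂ N₁
  have hg : ∀ k < N₁ + N₂, 0 < g k := fun k hk => by
    by_cases h : k < N₁
    · simpa [g, gapAppend, h] using hg₁.1 k h
    · simpa [g, gapAppend, h] using hg₂.1 (k - N₁) (by omega)
  refine circleFixedB_partialSum (by omega) hg hL (fun k hk => ?_) ?_
  · rcases lt_trichotomy (k + 1) N₁ with h | rfl | h
    · have hx : partialSum g (k + 1) < M := hM ▸ partialSum_lt_partialSum hg h (by omega)
      simp [hx, hx.ne, (hx.trans hML).ne, g, gapAppend, h, (by omega : k < N₁), hg₁.2 k h]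
    · simp [hM, g, gapAppend]
    · have hx₁ : M < partialSum g (k + 1) := hM ▸ partialSum_lt_partialSum hg h (by omega)
      have hx₂ : partialSum g (k + 1) < L := hL ▸ partialSum_lt_partialSum hg hk le_rfl
      simp only [hx₁.ne', hx₂.ne, hx₁.le.not_gt, g, gapAppend, if_false,
        if_neg (by omega : ¬k + 1 < N₁), if_neg (by omega : ¬k < N₁),
        show k + 1 - N₁ = k - N₁ + 1 by omega, hg₂.2 (k - N₁) (by omega)]
      ring
  · have hfirst : g 0 = g₁ 0 := if_pos hN₁
    have hlast : g (N₁ + N₂ - 1) = g₂ (N₂ - 1) := by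
      rw [show N₁ + N₂ - 1 = N₁ + (N₂ - 1) by omega]
      simp [g, gapAppend]
    simp [hML.ne', hfirst, hlast]

theorem fixed_configuration_after_adjusting_gap_values_general (a L M F₁ F₂ : ℝ) (ha : 1 < a)
    (hM : 0 < M) (hML : M < L) :
    ∃ N₀ : ℕ, ∀ N₁ ≥ N₀, ∀ N₂ ≥ N₀,
      ∃ G_M G_L : ℝ, ∃ x : ℕ → ℝ,
        CircleFixedB a L
          (fun y => if y = M then G_M else if y = L then G_L else if y < M then F₁ else F₂)
          (N₁ + N₂) x ∧
        x N₁ = M ∧ x (N₁ + N₂) = L := by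
  have ha₀ : 0 < a := by linarith
  refine ⟨1, fun N₁ hN₁ N₂ hN₂ => ?_⟩
  obtain ⟨g₁, hg₁, hsum₁⟩ := exists_constForceGaps ha₀ hM hN₁ F₁
  obtain ⟨g₂, hg₂, hsum₂⟩ := exists_constForceGaps ha₀ (sub_pos.2 hML) hN₂ F₂
  have hxM : partialSum (gapAppend g₁ g₂ N₁) N₁ = M :=
    (partialSum_gapAppend_of_le le_rfl).trans hsum₁
  have hxL : partialSum (gapAppend g₁ g₂ N₁) (N₁ + N₂) = L := by
    rw [partialSum_gapAppend_add, hsum₁, hsum₂]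
    ring
  exact ⟨_, _, _, circleFixedB_gapAppend hN₁ hN₂ hML hg₁ hg₂ hxM hxL, hxM, hxL⟩

/-- For `0 < M < L`, `F₁ > 0 > F₂` and all sufficiently large `N₁, N₂`, one can
modify the force at the gap points `M` and `L` so that a fixed configuration exists having
particles at `M` and `L`, with `N₁ + 1` particles in `[0, M]` and `N₂ + 1` in `[M, L]`
(the particle at `L` is identified with the point `0` of the circle). -/
theorem fixed_configuration_after_adjusting_gap_values (a L M F₁ F₂ : ℝ) (ha : 1 < a)
    (hM : 0 < M) (hML : M < L) (hF₁ : 0 < F₁) (hF₂ : F₂ < 0) :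
    ∃ N₀ : ℕ, ∀ N₁ ≥ N₀, ∀ N₂ ≥ N₀,
      ∃ G_M G_L : ℝ, ∃ x : ℕ → ℝ,
        CircleFixedB a L
          (fun y => if y = M then G_M else if y = L then G_L else if y < M then F₁ else F₂)
          (N₁ + N₂) x ∧
        x N₁ = M ∧ x (N₁ + N₂) = L :=
  fixed_configuration_after_adjusting_gap_values_general a L M F₁ F₂ ha hM hML
end

section
/- Let F > 0 be a constant external force on the segment [0, L]. Then for all sufficiently large N there exists a unique fixed configuration (x_1, x_2, ..., x_N) on the segment with x_1 = 0 and x_N = L. -/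
open Real Filter Set Asymptotics

open Topology

/-! In a fixed configuration the repulsions `f(Δ_k)` grow by exactly `F` from one gap to the
next, so `Δ_k = (t + (k - 1) F)^{-1/a}` with `t = f(Δ_1) ≥ F`, and the configuration is
determined by `t`. The total length `∑_{j < N-1} (t + j F)^{-1/a}` is continuous and strictly
decreasing in `t` and tends to `0` as `t → ∞`, so it takes the value `L` for exactly one `t ≥ F`
once it is `≥ L` at `t = F`; that happens for large `N` since `∑ j^{-1/a}` diverges for `a > 1`. -/

noncomputable def equilibriumGap (a F t : ℝ) (j : ℕ) : ℝ := (t + j * F) ^ (-a)⁻¹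

/-- Particles are numbered from `1`, as in `SegmentFixed`. -/
noncomputable def equilibriumPosition (a F t : ℝ) (k : ℕ) : ℝ :=
  ∑ j ∈ Finset.range (k - 1), equilibriumGap a F t j

section EquilibriumGap

variable {a F t : ℝ}

lemma equilibriumGap_pos (hF : 0 ≤ F) (ht : 0 < t) (j : ℕ) : 0 < equilibriumGap a F t j := by
  unfold equilibriumGap; positivity

lemma fpow_equilibriumGap (ha : a ≠ 0) (hF : 0 ≤ F) (ht : 0 ≤ t) (j : ℕ) :
    fpow a (equilibriumGap a F t j) = t + j * F :=
  rpow_inv_rpow (by positivity) (neg_ne_zero.mpr ha)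

lemma eq_equilibriumGap_of_fpow_eq {d : ℝ} {j : ℕ} (ha : a ≠ 0) (hd : 0 < d)
    (h : fpow a d = t + j * F) : d = equilibriumGap a F t j := by
  rw [equilibriumGap, ← h, fpow, rpow_rpow_inv hd.le (neg_ne_zero.mpr ha)]

lemma equilibriumPosition_one : equilibriumPosition a F t 1 = 0 := by
  simp [equilibriumPosition]

lemma equilibriumPosition_succ {k : ℕ} (hk : 1 ≤ k) :
    equilibriumPosition a F t (k + 1) =
      equilibriumPosition a F t k + equilibriumGap a F t (k - 1) := by
  obtain ⟨j, rfl⟩ := Nat.exists_eq_add_of_le' hk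
  simp [equilibriumPosition, Finset.sum_range_succ]

lemma equilibriumPosition_lt_succ (hF : 0 ≤ F) (ht : 0 < t) {k : ℕ} (hk : 1 ≤ k) :
    equilibriumPosition a F t k < equilibriumPosition a F t (k + 1) := by
  rw [equilibriumPosition_succ hk]
  linarith [equilibriumGap_pos (a := a) hF ht (k - 1)]

end EquilibriumGap

section TotalLength

variable {a F : ℝ}

lemma strictAntiOn_equilibriumPosition (ha : 0 < a) (hF : 0 ≤ F) {N : ℕ} (hN : 2 ≤ N) :
    StrictAntiOn (fun t => equilibriumPosition a F t N) (Ioi 0) := by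
  intro s hs t _ hst
  apply Finset.sum_lt_sum_of_nonempty (Finset.nonempty_range_iff.mpr (by omega))
  intro j _
  exact rpow_lt_rpow_of_neg (by have := mem_Ioi.mp hs; positivity) (by linarith)
    (by simpa using ha)

lemma continuousOn_equilibriumPosition (hF : 0 ≤ F) (N : ℕ) :
    ContinuousOn (fun t => equilibriumPosition a F t N) (Ioi 0) := by
  refine continuousOn_finsetSum _ fun j _ => ?_
  refine (continuousOn_id.add continuousOn_const).rpow_const fun t ht => Or.inl ?_
  have := mem_Ioi.mp ht
  change t + j * F ≠ 0
  positivity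

lemma tendsto_equilibriumPosition_nhds_zero (ha : 0 < a) (N : ℕ) :
    Tendsto (fun t => equilibriumPosition a F t N) atTop (𝓝 0) := by
  rw [← Finset.sum_const_zero (s := Finset.range (N - 1))]
  refine tendsto_finsetSum _ fun j _ => ?_
  simp only [equilibriumGap, inv_neg]
  exact (tendsto_rpow_neg_atTop (inv_pos.mpr ha)).comp
    (tendsto_atTop_add_const_right _ _ tendsto_id)

lemma not_summable_equilibriumGap (ha : 1 < a) (hF : 0 < F) {t : ℝ} (ht : 0 < t) :
    ¬ Summable (equilibriumGap a F t) := by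
  have hp : (-a)⁻¹ ≤ 0 := by rw [inv_neg]; exact neg_nonpos.mpr (by positivity)
  have hpseries : ¬ Summable fun j : ℕ => (t + F) ^ (-a)⁻¹ * ((j + 1 : ℕ) : ℝ) ^ (-a)⁻¹ := by
    rw [summable_mul_left_iff (rpow_pos_of_pos (by positivity) _).ne',
      summable_nat_add_iff 1 (f := fun n : ℕ => (n : ℝ) ^ (-a)⁻¹), summable_nat_rpow, not_lt,
      inv_neg]
    exact neg_le_neg (inv_le_one_of_one_le₀ ha.le)
  refine fun h => hpseries (h.of_nonneg_of_le (fun j => by positivity) fun j => ?_)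
  have hj : t + j * F ≤ (t + F) * ((j + 1 : ℕ) : ℝ) := by
    push_cast; nlinarith [(Nat.cast_nonneg j : (0 : ℝ) ≤ j)]
  rw [← mul_rpow (by positivity) (by positivity)]
  exact rpow_le_rpow_of_nonpos (by positivity) hj hp

lemma tendsto_equilibriumPosition_atTop (ha : 1 < a) (hF : 0 < F) {t : ℝ} (ht : 0 < t) :
    Tendsto (equilibriumPosition a F t) atTop atTop :=
  ((not_summable_iff_tendsto_nat_atTop_of_nonneg fun j => (equilibriumGap_pos hF.le ht j).le).mp
    (not_summable_equilibriumGap ha hF ht)).comp (tendsto_sub_atTop_nat 1)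

lemma exists_equilibriumPosition_eq (ha : 0 < a) (hF : 0 < F) {L : ℝ} (hL : 0 < L) {N : ℕ}
    (hLN : L ≤ equilibriumPosition a F F N) :
    ∃ t, F ≤ t ∧ equilibriumPosition a F t N = L := by
  obtain ⟨T, hTL, hFT⟩ := (((tendsto_equilibriumPosition_nhds_zero ha N).eventually
    (gt_mem_nhds hL)).and (eventually_ge_atTop F)).exists
  obtain ⟨t, ht, htL⟩ := intermediate_value_Icc' hFT
    ((continuousOn_equilibriumPosition hF.le N).mono fun s hs => lt_of_lt_of_le hF hs.1)
    ⟨hTL.le, hLN⟩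
  exact ⟨t, ht.1, htL⟩

end TotalLength

lemma segmentFixed_equilibriumPosition {a L F t : ℝ} {N : ℕ} (ha : a ≠ 0) (hF : 0 < F)
    (hFt : F ≤ t) (hN : 2 ≤ N) (htL : equilibriumPosition a F t N = L) :
    SegmentFixed a L F N (equilibriumPosition a F t) := by
  have ht : 0 < t := hF.trans_le hFt
  have hforce (j : ℕ) : fpow a (equilibriumPosition a F t (j + 2) -
      equilibriumPosition a F t (j + 1)) = t + j * F := by
    rw [equilibriumPosition_succ (Nat.le_add_left 1 j), add_sub_cancel_left, Nat.add_sub_cancel,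
      fpow_equilibriumGap ha hF.le ht.le]
  refine ⟨equilibriumPosition_one, htL, fun k hk _ => equilibriumPosition_lt_succ hF.le ht hk,
    fun k hk _ => ?_, ?_, ?_⟩
  · obtain ⟨j, rfl⟩ := Nat.exists_eq_add_of_le' hk
    rw [show j + 2 - 1 = j + 1 by omega, hforce, hforce (j + 1)]
    push_cast
    ring
  · have h := hforce 0
    norm_num [equilibriumPosition_one] at h
    linarith
  · obtain ⟨j, rfl⟩ := Nat.exists_eq_add_of_le' hN
    rw [show j + 2 - 1 = j + 1 by omega, ← htL, hforce]
    positivity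

namespace SegmentFixed

variable {a L F : ℝ} {N : ℕ} {x : ℕ → ℝ}

lemma fpow_sub (hx : SegmentFixed a L F N x) {j : ℕ} (hj : j + 2 ≤ N) :
    fpow a (x (j + 2) - x (j + 1)) = fpow a (x 2) + j * F := by
  obtain ⟨hx1, -, -, hbalance, -⟩ := hx
  induction j with
  | zero => simp [hx1]
  | succ j ih =>
    have h := hbalance (j + 2) (by omega) (by omega)
    rw [show j + 2 - 1 = j + 1 by omega] at h
    rw [show j + 1 + 2 = j + 2 + 1 by omega]
    push_cast
    linarith [ih (by omega)]

lemma eq_equilibriumPosition (ha : a ≠ 0) (hx : SegmentFixed a L F N x) {k : ℕ} (hk : 1 ≤ k)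
    (hkN : k ≤ N) : x k = equilibriumPosition a F (fpow a (x 2)) k := by
  induction k, hk using Nat.le_induction with
  | base => rw [hx.1, equilibriumPosition_one]
  | succ k hk ih =>
    obtain ⟨j, rfl⟩ := Nat.exists_eq_add_of_le' hk
    have hgap := eq_equilibriumGap_of_fpow_eq ha
      (sub_pos.mpr (hx.2.2.1 (j + 1) (by omega) (by omega))) (hx.fpow_sub (by omega))
    rw [equilibriumPosition_succ hk, ← ih (by omega), Nat.add_sub_cancel, ← hgap]
    ring

end SegmentFixed

/-- For a constant force `F > 0` on the segment `[0, L]` and all sufficiently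
large `N`, there exists a unique fixed configuration with `x 1 = 0` and `x N = L`. -/
theorem segment_existence_uniqueness (a L F : ℝ) (ha : 1 < a) (hL : 0 < L) (hF : 0 < F) :
    ∃ N₀ : ℕ, ∀ N ≥ N₀, ∃ x : ℕ → ℝ, SegmentFixed a L F N x ∧
      ∀ x' : ℕ → ℝ, SegmentFixed a L F N x' → ∀ k, 1 ≤ k → k ≤ N → x' k = x k := by
  have ha0 : 0 < a := zero_lt_one.trans ha
  obtain ⟨N₀, hN₀⟩ := eventually_atTop.mp
    ((tendsto_equilibriumPosition_atTop ha hF hF).eventually_ge_atTop L)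
  refine ⟨max N₀ 2, fun N hN => ?_⟩
  have hN2 : 2 ≤ N := le_of_max_le_right hN
  obtain ⟨t, hFt, htL⟩ := exists_equilibriumPosition_eq ha0 hF hL (hN₀ N (le_of_max_le_left hN))
  refine ⟨equilibriumPosition a F t,
    segmentFixed_equilibriumPosition ha0.ne' hF hFt hN2 htL, fun x hx k hk hkN => ?_⟩
  obtain ⟨-, hxL, -, -, hleft, -⟩ := id hx
  have hxt : fpow a (x 2) = t :=
    (strictAntiOn_equilibriumPosition ha0 hF.le hN2).injOn
      (hF.trans_le (sub_nonpos.mp hleft)) (hF.trans_le hFt)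
      (by rw [← hx.eq_equilibriumPosition ha0.ne' (by omega) le_rfl, hxL, htL])
  rw [hx.eq_equilibriumPosition ha0.ne' hk hkN, hxt]
end

section
/- Fix F > 0, a > 1 and k ≥ 1. For all sufficiently large N, the gaps Δ_k(L) of the unique fixed configuration of N particles on the segment [0, L] with x_1 = 0, x_N = L and constant force F are strictly increasing functions of the segment length: if 0 < L < L' then Δ_k(L) < Δ_k(L') for every k = 1, ..., N−1. -/
open Real Filter Set Asymptotics

lemma fpow_anti (a : ℝ) (ha : 0 < a) {s t : ℝ} (hs : 0 < s) (hst : s < t) :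
    fpow a t < fpow a s :=
  Real.rpow_lt_rpow_of_neg hs hst (by linarith)

lemma lt_of_fpow_lt (a : ℝ) (ha : 0 < a) {s t : ℝ} (hs : 0 < s) (ht : 0 < t)
    (h : fpow a t < fpow a s) : s < t := by
  by_contra hc
  push_neg at hc
  rcases eq_or_lt_of_le hc with h1 | h1
  · rw [h1] at h; exact lt_irrefl _ h
  · exact absurd (fpow_anti a ha ht h1) (not_lt.mpr h.le)

lemma gap_pow (a F L : ℝ) (N : ℕ) (x : ℕ → ℝ) (hx : SegmentFixed a L F N x) :
    ∀ k, 1 ≤ k → k ≤ N - 1 →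
      fpow a (x (k + 1) - x k) = fpow a (x 2 - x 1) + ((k : ℝ) - 1) * F := by
  intro k hk1
  induction k, hk1 using Nat.le_induction with
  | base => intro _; norm_num
  | succ k hk ih =>
    intro hk2
    have ihs := ih (by omega)
    have heq := hx.2.2.2.1 (k + 1) (by omega) (by omega)
    have hsub : (k + 1 : ℕ) - 1 = k := by omega
    rw [hsub] at heq
    have : fpow a (x (k + 1 + 1) - x (k + 1)) = fpow a (x (k + 1) - x k) + F := by
      linarith
    rw [this, ihs]
    push_cast
    ring

/-- For fixed `F > 0`, `a > 1` and all sufficiently large `N`, the gaps of the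
fixed configuration on the segment `[0, L]` are strictly increasing functions of `L`. -/
theorem gaps_increasing_in_length (a F : ℝ) (ha : 1 < a) (hF : 0 < F) :
    ∃ N₀ : ℕ, ∀ N ≥ N₀, ∀ L L' : ℝ, 0 < L → L < L' →
      ∀ x x' : ℕ → ℝ, SegmentFixed a L F N x → SegmentFixed a L' F N x' →
        ∀ k, 1 ≤ k → k ≤ N - 1 → x (k + 1) - x k < x' (k + 1) - x' k := by
  refine ⟨0, fun N _ L L' hL hLL' x x' hx hx' k hk1 hk2 => ?_⟩
  have ha0 : (0 : ℝ) < a := by linarith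
  have hN : 2 ≤ N := by omega
  have hpos : ∀ j, 1 ≤ j → j ≤ N - 1 → 0 < x (j + 1) - x j := fun j h1 h2 =>
    sub_pos.mpr (hx.2.2.1 j h1 (by omega))
  have hpos' : ∀ j, 1 ≤ j → j ≤ N - 1 → 0 < x' (j + 1) - x' j := fun j h1 h2 =>
    sub_pos.mpr (hx'.2.2.1 j h1 (by omega))
  have hd : 0 < x 2 - x 1 := hpos 1 le_rfl (by omega)
  have hd' : 0 < x' 2 - x' 1 := hpos' 1 le_rfl (by omega)
  have key : x 2 - x 1 < x' 2 - x' 1 := by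
    by_contra hc
    push_neg at hc
    -- then every gap of x' is ≤ corresponding gap of x, so L' ≤ L, contradiction
    have hle : ∀ j, 1 ≤ j → j ≤ N - 1 → x' (j + 1) - x' j ≤ x (j + 1) - x j := by
      intro j h1 h2
      by_contra hcj
      push_neg at hcj
      have h3 : fpow a (x' (j + 1) - x' j) < fpow a (x (j + 1) - x j) :=
        fpow_anti a ha0 (hpos j h1 h2) hcj
      rw [gap_pow a F L N x hx j h1 h2, gap_pow a F L' N x' hx' j h1 h2] at h3
      have h4 : fpow a (x' 2 - x' 1) < fpow a (x 2 - x 1) := by linarith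
      rcases eq_or_lt_of_le hc with h5 | h5
      · rw [h5] at h4; exact lt_irrefl _ h4
      · exact absurd (fpow_anti a ha0 hd' h5) (not_lt.mpr h4.le)
    have hsum : x N - x 1 = ∑ i ∈ Finset.range (N - 1), (x (i + 1 + 1) - x (i + 1)) := by
      rw [Finset.sum_range_sub (fun i => x (i + 1))]
      have : N - 1 + 1 = N := by omega
      rw [this]
    have hsum' : x' N - x' 1 = ∑ i ∈ Finset.range (N - 1), (x' (i + 1 + 1) - x' (i + 1)) := by
      rw [Finset.sum_range_sub (fun i => x' (i + 1))]
      have : N - 1 + 1 = N := by omega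
      rw [this]
    have hLe : L' ≤ L := by
      have h1 : x 1 = 0 := hx.1
      have h2 : x N = L := hx.2.1
      have h1' : x' 1 = 0 := hx'.1
      have h2' : x' N = L' := hx'.2.1
      rw [h1, h2, sub_zero] at hsum
      rw [h1', h2', sub_zero] at hsum'
      rw [hsum, hsum']
      apply Finset.sum_le_sum
      intro i hi
      have hi' : i < N - 1 := Finset.mem_range.mp hi
      exact hle (i + 1) (by omega) (by omega)
    linarith
  have h3 : fpow a (x' 2 - x' 1) < fpow a (x 2 - x 1) := fpow_anti a ha0 hd key
  have h4 : fpow a (x' (k + 1) - x' k) < fpow a (x (k + 1) - x k) := by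
    rw [gap_pow a F L N x hx k hk1 hk2, gap_pow a F L' N x' hx' k hk1 hk2]
    linarith
  exact lt_of_fpow_lt a ha0 (hpos k hk1 hk2) (hpos' k hk1 hk2) h4
end

section
/- Fix L > 0, F > 0 and a > 1. For the unique fixed configuration of N particles on the segment [0, L] with x_1 = 0, x_N = L and constant force F, write Δ_k = (L/(N−1))(1 + δ_k) and q = (L/(N−1))^a F. Then as N → ∞, δ_1 = a^{−1} q (N/2 − 1) + (a^{−1}(a^{−1}+1)/12) q^2 (N−2)(N−3) + J_1(N), where J_1(N) = o(N^{−2a+2}). -/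
/-!
Put `h = L/(N-1)`, `q = h^a F` and `b = 1/a`. The force balance telescopes to
`Δ_j^{-a} = Δ_1^{-a} + (j-1) F`, so the rescaled gaps are `Δ_{j+1}/h = (1 + u_j)^{-b}` with
`u_j = ε + j q` for a single unknown `ε`, and since the `N-1` gaps fill `[0, L]` their mean is `1`.
Monotonicity of `u ↦ (1+u)^{-b}` then forces `-M ≤ ε ≤ 0` with `M = (N-2) q = O(N^{1-a})`, so all
`|u_j| ≤ M`. Expanding `(1+u)^{-b}` to second order uniformly in `j` and using the first two
moments of the arithmetic progression `u_j`, the mean condition shows that the mean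
`η = ε + M/2` of the `u_j` is `O(M²)`, and then that `η = (b+1)/24 q² ((N-1)² - 1) + O(M³)`.
Substituting `ε = η - M/2` into `δ_1 = (1+ε)^{-b} - 1`, the `q²` terms combine into the stated
coefficient and the error is `O(M³) = O(N^{3-3a}) = o(N^{2-2a})`.
-/

open Real Filter Set Asymptotics

open Topology Finset

noncomputable def binomialRemainder (p u : ℝ) : ℝ :=
  (1 + u) ^ p - (1 + p * u + p * (p - 1) / 2 * u ^ 2)

lemma binomialRemainder_isBigO (p : ℝ) : binomialRemainder p =O[𝓝 0] fun u => u ^ 3 := by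
  have choose_two : Ring.choose p 2 = p * (p - 1) / 2 := by
    rw [Ring.choose_eq_smul]
    simp only [Nat.factorial, Nat.succ_eq_add_one, Nat.reduceAdd, zero_add, mul_one,
      Nat.cast_ofNat, descPochhammer_succ_right, descPochhammer_zero, CharP.cast_eq_zero, sub_zero,
      one_mul, Nat.cast_one, Polynomial.smeval_mul, Polynomial.smeval_X, pow_one,
      Polynomial.smeval_sub, Polynomial.smeval_one, pow_zero, one_smul, smul_eq_mul]
    ring
  have h := (one_add_rpow_hasFPowerSeriesAt_zero (a := p)).isBigO_sub_partialSum_pow 3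
  simp only [zero_add, FormalMultilinearSeries.partialSum, binomialSeries,
    FormalMultilinearSeries.apply_eq_prod_smul_coeff, prod_const, card_univ, Fintype.card_fin,
    FormalMultilinearSeries.coeff_ofScalars, smul_eq_mul, sum_range_succ, range_one, sum_singleton,
    pow_zero, Ring.choose_zero_right', mul_one, pow_one, Ring.choose_one_right', choose_two,
    norm_eq_abs] at h
  refine (h.congr_left fun u => by rw [binomialRemainder]; ring).trans ?_
  exact isBigO_of_le _ fun u => by simp

lemma sum_binomialRemainder_isBigO {ι : Type*} {l : Filter ι} (p : ℝ) {m : ι → ℕ}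
    {u : ι → ℕ → ℝ} {M : ι → ℝ} (hM : Tendsto M l (𝓝 0))
    (hu : ∀ᶠ i in l, ∀ j < m i, |u i j| ≤ M i) :
    (fun i => ∑ j ∈ range (m i), binomialRemainder p (u i j)) =O[l] fun i => m i * M i ^ 3 := by
  obtain ⟨K, hK0, hK⟩ := (binomialRemainder_isBigO p).exists_nonneg
  obtain ⟨δ, hδ, hKδ⟩ := Metric.eventually_nhds_iff.mp hK.bound
  refine IsBigO.of_bound K ?_
  filter_upwards [hu, hM.eventually (gt_mem_nhds hδ)] with i hui hMi
  have hterm : ∀ j ∈ range (m i), ‖binomialRemainder p (u i j)‖ ≤ K * M i ^ 3 := by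
    intro j hj
    have huj := hui j (mem_range.mp hj)
    refine (hKδ (by simpa [Real.dist_eq] using huj.trans_lt hMi)).trans ?_
    rw [norm_pow, Real.norm_eq_abs]
    gcongr
  calc ‖∑ j ∈ range (m i), binomialRemainder p (u i j)‖
      ≤ ∑ j ∈ range (m i), K * M i ^ 3 := norm_sum_le_of_le _ hterm
    _ = K * (m i * M i ^ 3) := by rw [sum_const, card_range, nsmul_eq_mul]; ring
    _ ≤ K * ‖(m i : ℝ) * M i ^ 3‖ := by gcongr; exact le_abs_self _

lemma sum_range_add_mul (m : ℕ) (ε q : ℝ) :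
    ∑ j ∈ range m, (ε + j * q) = m * (ε + (m - 1) * q / 2) := by
  induction m with
  | zero => simp
  | succ m ih => rw [sum_range_succ, ih]; push_cast; ring

lemma sum_range_add_mul_sq (m : ℕ) (ε q : ℝ) :
    ∑ j ∈ range m, (ε + j * q) ^ 2 = m * ((ε + (m - 1) * q / 2) ^ 2 + q ^ 2 * (m ^ 2 - 1) / 12) := by
  induction m with
  | zero => simp
  | succ m ih => rw [sum_range_succ, ih]; push_cast; ring

lemma abs_cast_sq_sub_one_le (m : ℕ) : |(m : ℝ) ^ 2 - 1| ≤ 3 * ((m : ℝ) - 1) ^ 2 := by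
  rcases m with _ | _ | m
  · norm_num
  · norm_num
  · have hm : (0 : ℝ) ≤ m := m.cast_nonneg
    push_cast
    rw [abs_of_nonneg (by nlinarith)]
    nlinarith

/-- For a fixed configuration, `(1 + (ε + j * q)) ^ (-b)` with `j < m` are the gaps `Δ_{j+1}` in
units of the mean gap `h = L / m`, where `b = 1/a`, `q = h^a F` and `ε = (Δ_1 / h)^(-a) - 1`;
the equation says that the gaps fill the segment. -/
def GapBalance (b : ℝ) (m : ℕ) (q ε : ℝ) : Prop :=
  0 < m ∧ 0 ≤ q ∧ 0 < 1 + ε ∧ ∑ j ∈ range m, (1 + (ε + j * q)) ^ (-b) = m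

namespace GapBalance

variable {b q ε : ℝ} {m : ℕ}

lemma nonpos (h : GapBalance b m q ε) (hb : 0 < b) : ε ≤ 0 := by
  obtain ⟨hm, hq, -, hsum⟩ := h
  by_contra! hε
  have hlt : ∑ j ∈ range m, (1 + (ε + j * q)) ^ (-b) < ∑ j ∈ range m, (1 : ℝ) :=
    sum_lt_sum_of_nonempty (nonempty_range_iff.mpr hm.ne') fun j _ =>
      rpow_lt_one_of_one_lt_of_neg (by nlinarith [mul_nonneg (Nat.cast_nonneg (α := ℝ) j) hq])
        (neg_lt_zero.mpr hb)
  simp [hsum] at hlt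

lemma neg_sub_one_mul_le (h : GapBalance b m q ε) (hb : 0 < b) : -(((m : ℝ) - 1) * q) ≤ ε := by
  obtain ⟨hm, hq, hε, hsum⟩ := h
  by_contra! hlt
  have hgt : ∑ j ∈ range m, (1 : ℝ) < ∑ j ∈ range m, (1 + (ε + j * q)) ^ (-b) := by
    refine sum_lt_sum_of_nonempty (nonempty_range_iff.mpr hm.ne') fun j hj => ?_
    have hjm : (j : ℝ) + 1 ≤ m := by exact_mod_cast mem_range.mp hj
    have hjq := mul_nonneg (Nat.cast_nonneg (α := ℝ) j) hq
    exact one_lt_rpow_of_pos_of_lt_one_of_neg (by linarith) (by nlinarith) (neg_lt_zero.mpr hb)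
  simp [hsum] at hgt

lemma abs_add_mul_le (h : GapBalance b m q ε) (hb : 0 < b) (j : ℕ) (hj : j < m) :
    |ε + j * q| ≤ ((m : ℝ) - 1) * q := by
  have hjm : (j : ℝ) + 1 ≤ m := by exact_mod_cast hj
  have := h.nonpos hb
  have := h.neg_sub_one_mul_le hb
  have := h.2.1
  rw [abs_le]
  constructor <;> nlinarith

lemma abs_mean_le (h : GapBalance b m q ε) (hb : 0 < b) :
    |ε + ((m : ℝ) - 1) * q / 2| ≤ ((m : ℝ) - 1) * q := by
  have := h.nonpos hb
  have := h.neg_sub_one_mul_le hb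
  rw [abs_le]
  constructor <;> linarith

lemma sum_binomialRemainder_eq (h : GapBalance b m q ε) :
    ∑ j ∈ range m, binomialRemainder (-b) (ε + j * q) =
      m * (b * (ε + (m - 1) * q / 2)
        - b * (b + 1) / 2 * ((ε + (m - 1) * q / 2) ^ 2 + q ^ 2 * (m ^ 2 - 1) / 12)) := by
  have hpoly : ∑ j ∈ range m, (1 + -b * (ε + j * q) + -b * (-b - 1) / 2 * (ε + j * q) ^ 2) =
      m + -b * ∑ j ∈ range m, (ε + j * q) + -b * (-b - 1) / 2 * ∑ j ∈ range m, (ε + j * q) ^ 2 := by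
    simp only [sum_add_distrib, ← mul_sum, sum_const, card_range, nsmul_eq_mul, mul_one]
  simp only [binomialRemainder, sum_sub_distrib, h.2.2.2, hpoly, sum_range_add_mul,
    sum_range_add_mul_sq]
  ring

end GapBalance

section Asymptotics

variable {ι : Type*} {l : Filter ι}

lemma isBigO_pow_succ_of_tendsto_zero {M : ι → ℝ} (hM : Tendsto M l (𝓝 0)) (k : ℕ) :
    (fun i => M i ^ (k + 1)) =O[l] fun i => M i ^ k :=
  (isLittleO_pow_pow (Nat.lt_succ_self k)).isBigO.comp_tendsto hM

variable {b : ℝ} {m : ι → ℕ} {q ε : ι → ℝ}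

namespace GapBalance

lemma isBigO_defect (hb : 0 < b) (hbal : ∀ᶠ i in l, GapBalance b (m i) (q i) (ε i))
    (hM : Tendsto (fun i => ((m i : ℝ) - 1) * q i) l (𝓝 0)) :
    (fun i => b * (ε i + ((m i : ℝ) - 1) * q i / 2) - b * (b + 1) / 2 *
        ((ε i + ((m i : ℝ) - 1) * q i / 2) ^ 2 + q i ^ 2 * ((m i : ℝ) ^ 2 - 1) / 12))
      =O[l] fun i => (((m i : ℝ) - 1) * q i) ^ 3 := by
  have hR := sum_binomialRemainder_isBigO (-b) hM (hbal.mono fun i h => h.abs_add_mul_le hb)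
  refine ((isBigO_refl (fun i => (m i : ℝ)⁻¹) l).mul hR).congr' ?_ ?_ <;>
    filter_upwards [hbal] with i hi <;>
    have hm : (m i : ℝ) ≠ 0 := by exact_mod_cast hi.1.ne'
  · rw [hi.sum_binomialRemainder_eq, inv_mul_cancel_left₀ hm]
  · rw [inv_mul_cancel_left₀ hm]

lemma isBigO_mean (hb : 0 < b) (hbal : ∀ᶠ i in l, GapBalance b (m i) (q i) (ε i))
    (hM : Tendsto (fun i => ((m i : ℝ) - 1) * q i) l (𝓝 0)) :
    (fun i => ε i + ((m i : ℝ) - 1) * q i / 2) =O[l] fun i => (((m i : ℝ) - 1) * q i) ^ 2 := by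
  have hmean_sq : (fun i => (ε i + ((m i : ℝ) - 1) * q i / 2) ^ 2)
      =O[l] fun i => (((m i : ℝ) - 1) * q i) ^ 2 := by
    refine IsBigO.of_bound' (hbal.mono fun i hi => ?_)
    rw [norm_pow, norm_pow]
    gcongr
    exact (hi.abs_mean_le hb).trans (le_abs_self _)
  have hmoment : (fun i => q i ^ 2 * ((m i : ℝ) ^ 2 - 1))
      =O[l] fun i => (((m i : ℝ) - 1) * q i) ^ 2 := by
    refine IsBigO.of_bound 3 (Eventually.of_forall fun i => ?_)
    simp only [Real.norm_eq_abs, abs_mul, abs_pow, mul_pow, sq_abs]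
    nlinarith [abs_cast_sq_sub_one_le (m i), sq_nonneg (q i)]
  refine (((isBigO_defect hb hbal hM).trans (isBigO_pow_succ_of_tendsto_zero hM 2)).add
    ((hmean_sq.add ((hmoment.const_mul_left (1 / 12)))).const_mul_left (b * (b + 1) / 2))
    |>.const_mul_left b⁻¹).congr_left fun i => ?_
  field_simp
  ring

lemma isBigO_mean_sq (hb : 0 < b) (hbal : ∀ᶠ i in l, GapBalance b (m i) (q i) (ε i))
    (hM : Tendsto (fun i => ((m i : ℝ) - 1) * q i) l (𝓝 0)) :
    (fun i => (ε i + ((m i : ℝ) - 1) * q i / 2) ^ 2) =O[l]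
      fun i => (((m i : ℝ) - 1) * q i) ^ 3 :=
  ((isBigO_mean hb hbal hM).pow 2).trans
    ((isBigO_pow_succ_of_tendsto_zero hM 3).congr_left fun i => by ring)

lemma isBigO_mean_sub (hb : 0 < b) (hbal : ∀ᶠ i in l, GapBalance b (m i) (q i) (ε i))
    (hM : Tendsto (fun i => ((m i : ℝ) - 1) * q i) l (𝓝 0)) :
    (fun i => ε i + ((m i : ℝ) - 1) * q i / 2 - (b + 1) / 24 * q i ^ 2 * ((m i : ℝ) ^ 2 - 1))
      =O[l] fun i => (((m i : ℝ) - 1) * q i) ^ 3 := by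
  refine ((isBigO_defect hb hbal hM).add
    ((isBigO_mean_sq hb hbal hM).const_mul_left (b * (b + 1) / 2))
    |>.const_mul_left b⁻¹).congr_left fun i => ?_
  field_simp
  ring

theorem isBigO_expansion (hb : 0 < b) (hbal : ∀ᶠ i in l, GapBalance b (m i) (q i) (ε i))
    (hM : Tendsto (fun i => ((m i : ℝ) - 1) * q i) l (𝓝 0)) :
    (fun i => (1 + ε i) ^ (-b) - 1 - b * (((m i : ℝ) - 1) * q i) / 2
        - b * (b + 1) / 12 * q i ^ 2 * ((m i : ℝ) - 1) * ((m i : ℝ) - 2))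
      =O[l] fun i => (((m i : ℝ) - 1) * q i) ^ 3 := by
  have hεM : ∀ᶠ i in l, ‖ε i‖ ≤ ((m i : ℝ) - 1) * q i :=
    hbal.mono fun i hi => by simpa using hi.abs_add_mul_le hb 0 hi.1
  have hrem : (fun i => binomialRemainder (-b) (ε i)) =O[l]
      fun i => (((m i : ℝ) - 1) * q i) ^ 3 := by
    refine ((binomialRemainder_isBigO (-b)).comp_tendsto (squeeze_zero_norm' hεM hM)).trans
      (IsBigO.of_bound' (hεM.mono fun i hi => ?_))
    simp only [Function.comp_apply, norm_pow]
    gcongr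
    exact hi.trans (le_abs_self _)
  have hcross : (fun i => ((m i : ℝ) - 1) * q i * (ε i + ((m i : ℝ) - 1) * q i / 2))
      =O[l] fun i => (((m i : ℝ) - 1) * q i) ^ 3 :=
    ((isBigO_refl _ l).mul (isBigO_mean hb hbal hM)).congr_right fun i => by ring
  -- With `M = (m-1) q` and `η = ε + M/2` the mean of the `ε + j q`, expand `(1 + (η - M/2))^(-b)`;
  -- the `q²` terms cancel exactly.
  refine (((isBigO_mean_sub hb hbal hM).const_mul_left (-b)).add
    (((isBigO_mean_sq hb hbal hM).sub hcross).const_mul_left (b * (b + 1) / 2))).add hrem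
    |>.congr_left fun i => ?_
  simp only [binomialRemainder]
  ring

end GapBalance

end Asymptotics

lemma rpow_neg_rpow_neg_inv {y a : ℝ} (hy : 0 ≤ y) (ha : a ≠ 0) : (y ^ (-a)) ^ (-a⁻¹) = y := by
  rw [← rpow_mul hy, neg_mul_neg, mul_inv_cancel₀ ha, rpow_one]

namespace SegmentFixed

variable {a L F : ℝ} {N : ℕ} {x : ℕ → ℝ}

lemma gap_pos (hx : SegmentFixed a L F N x) {j : ℕ} (hj : j < N - 1) :
    0 < x (j + 2) - x (j + 1) :=
  sub_pos.mpr (hx.2.2.1 (j + 1) (by omega) (by omega))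

lemma sum_gaps (hx : SegmentFixed a L F N x) (hN : 1 ≤ N) :
    ∑ j ∈ range (N - 1), (x (j + 2) - x (j + 1)) = L := by
  rw [sum_range_sub (fun j => x (j + 1)), Nat.sub_add_cancel hN, hx.2.1, hx.1, sub_zero]

lemma gap_rpow_neg (hx : SegmentFixed a L F N x) {j : ℕ} (hj : j < N - 1) :
    (x (j + 2) - x (j + 1)) ^ (-a) = (x 2 - x 1) ^ (-a) + j * F := by
  induction j with
  | zero => simp
  | succ j ih =>
    have hforce := hx.2.2.2.1 (j + 2) (by omega) (by omega)
    rw [show j + 2 - 1 = j + 1 by omega, show j + 2 + 1 = j + 1 + 2 by omega] at hforce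
    simp only [fpow, ih (by omega)] at hforce
    push_cast
    linarith

lemma gapBalance (hx : SegmentFixed a L F N x) (ha : 0 < a) (hL : 0 < L) (hF : 0 < F)
    (hN : 2 ≤ N) :
    GapBalance a⁻¹ (N - 1) ((L / ((N : ℝ) - 1)) ^ a * F)
      (((x 2 - x 1) / (L / ((N : ℝ) - 1))) ^ (-a) - 1) := by
  have hN1 : (((N - 1 : ℕ) : ℝ)) = (N : ℝ) - 1 := by
    rw [Nat.cast_sub (by omega), Nat.cast_one]
  have hN1pos : (0 : ℝ) < (N : ℝ) - 1 := by
    rw [← hN1]; exact_mod_cast (by omega : 0 < N - 1)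
  set h := L / ((N : ℝ) - 1) with hh
  have hhpos : 0 < h := div_pos hL hN1pos
  have hscale : ∀ d, 0 < d → (d / h) ^ (-a) = d ^ (-a) * h ^ a := fun d hd => by
    rw [div_rpow hd.le hhpos.le, rpow_neg hhpos.le, div_inv_eq_mul]
  have hnorm : ∀ j < N - 1, ((x (j + 2) - x (j + 1)) / h) ^ (-a) =
      1 + ((((x 2 - x 1) / h) ^ (-a) - 1) + j * (h ^ a * F)) := fun j hj => by
    rw [hscale _ (hx.gap_pos hj), hscale _ (hx.gap_pos (j := 0) (by omega)), hx.gap_rpow_neg hj]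
    ring
  refine ⟨by omega, by positivity, ?_, ?_⟩
  · have := hx.gap_pos (j := 0) (by omega)
    simp only [add_sub_cancel]
    positivity
  · calc ∑ j ∈ range (N - 1), (1 + ((((x 2 - x 1) / h) ^ (-a) - 1) + j * (h ^ a * F))) ^ (-a⁻¹)
        = ∑ j ∈ range (N - 1), (x (j + 2) - x (j + 1)) / h := by
          refine sum_congr rfl fun j hj => ?_
          rw [← hnorm j (mem_range.mp hj),
            rpow_neg_rpow_neg_inv (div_pos (hx.gap_pos (mem_range.mp hj)) hhpos).le ha.ne']
      _ = ((N - 1 : ℕ) : ℝ) := by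
          rw [← sum_div, hx.sum_gaps (by omega), hN1, hh]
          field_simp

end SegmentFixed

lemma sub_two_mul_rpow_le {a L F n : ℝ} (ha : 0 ≤ a) (hL : 0 < L) (hF : 0 ≤ F) (hn : 2 ≤ n) :
    (n - 2) * ((L / (n - 1)) ^ a * F) ≤ (2 * L) ^ a * F * n ^ (1 - a) := by
  have hn0 : 0 < n := by linarith
  have hh : 0 < L / (n - 1) := div_pos hL (by linarith)
  have hgap : (L / (n - 1)) ^ a ≤ (2 * L) ^ a * n ^ (-a) := by
    rw [rpow_neg hn0.le, ← div_eq_mul_inv, ← div_rpow (by positivity) hn0.le]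
    refine rpow_le_rpow hh.le ?_ ha
    rw [div_le_div_iff₀ (by linarith) hn0]
    nlinarith
  calc (n - 2) * ((L / (n - 1)) ^ a * F) ≤ n * ((L / (n - 1)) ^ a * F) := by
        gcongr
        linarith
    _ ≤ n * ((2 * L) ^ a * n ^ (-a) * F) := by gcongr
    _ = (2 * L) ^ a * F * n ^ (1 - a) := by
        rw [sub_eq_add_neg, rpow_add hn0, rpow_one]; ring

lemma isBigO_segment_spread {a L F : ℝ} (ha : 0 ≤ a) (hL : 0 < L) (hF : 0 ≤ F) :
    (fun N : ℕ => ((N : ℝ) - 2) * ((L / ((N : ℝ) - 1)) ^ a * F))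
      =O[atTop] fun N : ℕ => (N : ℝ) ^ (1 - a) := by
  refine IsBigO.of_bound ((2 * L) ^ a * F) ((eventually_ge_atTop 2).mono fun N hN => ?_)
  have hN : (2 : ℝ) ≤ N := by exact_mod_cast hN
  have hh : 0 < L / ((N : ℝ) - 1) := div_pos hL (by linarith)
  rw [norm_of_nonneg (mul_nonneg (by linarith) (by positivity)), norm_of_nonneg (by positivity)]
  exact sub_two_mul_rpow_le ha hL hF hN

lemma isLittleO_pow_three {ι : Type*} {l : Filter ι} {M g : ι → ℝ} (hM : Tendsto M l (𝓝 0))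
    (hMg : M =O[l] g) : (fun i => M i ^ 3) =o[l] fun i => g i ^ 2 :=
  (((isLittleO_one_iff ℝ).mpr hM).mul_isBigO (hMg.pow 2)).congr (fun i => by ring)
    fun i => one_mul _

/-- Asymptotic expansion of `δ 1` for the fixed configurations on `[0, L]`:
with `Δ k = (L/(N-1)) (1 + δ k)` and `q = (L/(N-1))^a F`,
`δ 1 = a⁻¹ q (N/2 - 1) + (a⁻¹(a⁻¹+1)/12) q² (N-2)(N-3) + o(N^{-2a+2})`. -/
theorem delta_one_expansion (a L F : ℝ) (ha : 1 < a) (hL : 0 < L) (hF : 0 < F)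
    (N₀ : ℕ) (x : ℕ → ℕ → ℝ) (hx : ∀ N ≥ N₀, SegmentFixed a L F N (x N)) :
    (fun N : ℕ =>
        ((x N 2 - x N 1) * ((N : ℝ) - 1) / L - 1)
          - a⁻¹ * ((L / ((N : ℝ) - 1)) ^ a * F) * ((N : ℝ) / 2 - 1)
          - (a⁻¹ * (a⁻¹ + 1) / 12) * ((L / ((N : ℝ) - 1)) ^ a * F) ^ 2
              * ((N : ℝ) - 2) * ((N : ℝ) - 3))
      =o[atTop] (fun N : ℕ => (N : ℝ) ^ (-2 * a + 2)) := by
  have ha0 : 0 < a := by linarith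
  have hfix : ∀ᶠ N in atTop, 2 ≤ N ∧ SegmentFixed a L F N (x N) :=
    (eventually_ge_atTop (max N₀ 2)).mono fun N hN =>
      ⟨le_of_max_le_right hN, hx N (le_of_max_le_left hN)⟩
  have hcast : ∀ᶠ N : ℕ in atTop, ((N - 1 : ℕ) : ℝ) = (N : ℝ) - 1 :=
    hfix.mono fun N hN => by rw [Nat.cast_sub (by omega), Nat.cast_one]
  have hMO := isBigO_segment_spread ha0.le hL hF.le
  have hM0 := hMO.trans_tendsto ((tendsto_rpow_neg_atTop (by linarith : 0 < a - 1)).comp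
    tendsto_natCast_atTop_atTop |>.congr fun N => by simp)
  have hexp := GapBalance.isBigO_expansion (inv_pos.mpr ha0)
    (hfix.mono fun N hN => hN.2.gapBalance ha0 hL hF hN.1)
    (hM0.congr' (hcast.mono fun N hN => by simp only [hN]; ring))
  have hM3 : (fun N : ℕ => (((N : ℝ) - 2) * ((L / ((N : ℝ) - 1)) ^ a * F)) ^ 3)
      =o[atTop] fun N : ℕ => (N : ℝ) ^ (-2 * a + 2) :=
    (isLittleO_pow_three hM0 hMO).congr_right fun N => by
      rw [← rpow_natCast, ← rpow_mul (Nat.cast_nonneg N)]; ring_nf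
  refine (hexp.congr' ?_ (hcast.mono fun N hN => by simp only [hN]; ring)).trans_isLittleO hM3
  filter_upwards [hfix, hcast] with N hN hN1
  have hN2 : (2 : ℝ) ≤ N := by exact_mod_cast hN.1
  have hgap := hN.2.gap_pos (j := 0) (by omega)
  rw [add_sub_cancel, rpow_neg_rpow_neg_inv (div_pos hgap (div_pos hL (by linarith))).le ha0.ne',
    hN1]
  field_simp
  ring
end
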